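/- arXiv:1311.5522 — 7 statements merged into one kernel-verified Lean document; each statement's English description precedes it below -/
import Mathlib

section
/- If κ is a singular cardinal with 2^κ = κ⁺ and A is a cofinal subset of κ consisting of regular cardinals with |A| < min(A), then there exists a scale of length κ⁺ in ∏A, i.e. a sequence ⟨f_α : α < κ⁺⟩ of functions in ∏A that is increasing and cofinal with respect to the eventual domination order <*. -/
/-!
Since `|A| ≤ κ`, the product `∏A` has at most `κ ^ κ = 2 ^ κ = κ⁺` elements, so it can be
enumerated as `⟨h_α : α < κ⁺⟩`. Define `f_α` by recursion: `f_α(a)` exceeds `h_α(a)` and, whenever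
`cf α < a`, also exceeds `f_β(a)` for every `β` in a fixed cofinal subset of `α` of size `cf α`; by
regularity of `a` this stays below `a`. As `κ` is singular, every `α < κ⁺` has `cf α < κ`, so the
second clause applies on a tail of `A`, and `f_β <* f_α` for `β < α` follows by induction through
the cofinal subset.
-/

open Cardinal Ordinal
open Set Filter

universe u v

theorem Ordinal.cof_lt_of_lt_ord_succ {κ : Cardinal.{u}} (hκ : κ.ord.cof < κ) {α : Ordinal.{u}}
    (hα : α < (Order.succ κ).ord) : α.cof < κ := by
  have hle : α.cof ≤ κ := (cof_le_card α).trans (Order.lt_succ_iff.mp (lt_ord.mp hα))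
  refine hle.lt_of_ne fun h => hκ.ne ?_
  rw [← h, cof_ord_cof]

theorem Cardinal.mk_le_lift_of_forall_lt {A : Set Cardinal.{u}} {κ : Cardinal.{u}}
    (hA : ∀ a ∈ A, a < κ) : #A ≤ lift.{u + 1} κ := by
  rw [← card_ord κ, ← Cardinal.mk_Iio_ordinal]
  refine mk_le_of_injective
    (f := fun a : A => (⟨(a : Cardinal).ord, ord_lt_ord.2 (hA a a.2)⟩ : Iio κ.ord)) ?_
  intro a b hab
  exact Subtype.ext (ord_injective (congrArg Subtype.val hab))

theorem Cardinal.mk_pi_Iio_ord_le {ι : Type (u + 1)} {c : ι → Cardinal.{u}} {κ : Cardinal.{u}}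
    (hc : ∀ i, c i ≤ κ) : #(Set.univ.pi fun i => Iio (c i).ord) ≤ lift.{u + 1} κ ^ #ι := by
  rw [← card_ord κ, ← Cardinal.mk_Iio_ordinal, power_def]
  refine mk_le_of_injective (f := fun p i =>
    (⟨p.1 i, (p.2 i trivial).trans_le (ord_le_ord.2 (hc i))⟩ : Iio κ.ord)) ?_
  intro p q hpq
  exact Subtype.ext (funext fun i => congrArg Subtype.val (congrFun hpq i))

theorem Cardinal.mk_pi_Iio_ord_le_two_power {A : Set Cardinal.{u}} {κ : Cardinal.{u}}
    (hκ : ℵ₀ ≤ κ) (hA : ∀ a ∈ A, a < κ) :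
    #(Set.univ.pi fun a : A => Iio (a : Cardinal).ord) ≤ lift.{u + 1} (2 ^ κ) :=
  calc #(Set.univ.pi fun a : A => Iio (a : Cardinal).ord)
      _ ≤ lift κ ^ #A := mk_pi_Iio_ord_le fun a => (hA a a.2).le
      _ ≤ lift κ ^ lift κ :=
        power_le_power_left (by simpa using (aleph0_pos.trans_le hκ).ne')
          (mk_le_lift_of_forall_lt hA)
      _ = lift (2 ^ κ) := by rw [← lift_power, power_self_eq hκ]

theorem Set.Nonempty.exists_surjOn_Iio_ord {X : Type v} {S : Set X} (hS : S.Nonempty)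
    {μ : Cardinal.{u}} (h : lift.{u} #S ≤ lift.{v} μ) :
    ∃ H : Ordinal.{u} → X, (∀ α, H α ∈ S) ∧ SurjOn H (Iio μ.ord) S := by
  have : Nonempty S := hS.to_subtype
  obtain ⟨e⟩ : Nonempty (S ↪ Iio μ.ord) := by
    rw [← lift_mk_le', Cardinal.mk_Iio_ordinal, card_ord]
    simpa using Cardinal.lift_le.{u + 1}.2 h
  refine ⟨fun α => if hα : α < μ.ord then (Function.invFun e ⟨α, hα⟩ : S).1 else hS.some,
    fun α => ?_, fun x hx => ?_⟩
  · dsimp only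
    split
    exacts [Subtype.prop _, hS.some_mem]
  · obtain ⟨⟨α, hα⟩, hαx⟩ := Function.invFun_surjective e.injective ⟨x, hx⟩
    exact ⟨α, hα, by simp only [dif_pos (show α < μ.ord from hα), hαx]⟩

theorem Filter.Eventually.exists_forall_gt_of_atTop {α : Type u} [LinearOrder α] {A : Set α}
    [Nonempty A] {p : A → Prop} (h : ∀ᶠ a in atTop, p a) : ∃ γ ∈ A, ∀ a : A, γ < a → p a := by
  obtain ⟨γ, hγ⟩ := eventually_atTop.1 h
  exact ⟨γ, γ.2, fun a ha => hγ a ha.le⟩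

namespace Ordinal

noncomputable def fundamentalSeq (o : Ordinal.{u}) : Iio o.cof.ord → Iio o :=
  (exists_isFundamentalSeq rfl).choose

theorem isFundamentalSeq_fundamentalSeq (o : Ordinal.{u}) : IsFundamentalSeq o.fundamentalSeq :=
  (exists_isFundamentalSeq rfl).choose_spec

theorem exists_le_fundamentalSeq {o a : Ordinal.{u}} (ha : a < o) :
    ∃ j, a ≤ o.fundamentalSeq j := by
  obtain ⟨_, ⟨j, rfl⟩, hj⟩ := o.isFundamentalSeq_fundamentalSeq.isCofinal_range ⟨a, ha⟩
  exact ⟨j, hj⟩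

end Ordinal

section Scale

variable {ι : Type v} (c : ι → Cardinal.{u}) (H : Ordinal.{u} → ι → Ordinal.{u})

noncomputable def scaleOf (α : Ordinal.{u}) (i : ι) : Ordinal.{u} :=
  max (H α i + 1)
    (if α.cof < c i then ⨆ j, scaleOf (α.fundamentalSeq j) i + 1 else 0)
termination_by α
decreasing_by exact (α.fundamentalSeq j).2

theorem lt_scaleOf (α : Ordinal.{u}) (i : ι) : H α i < scaleOf c H α i := by
  rw [scaleOf]
  exact (lt_add_one _).trans_le (le_max_left _ _)

theorem scaleOf_fundamentalSeq_lt {α : Ordinal.{u}} {i : ι} (hi : α.cof < c i)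
    (j : Iio α.cof.ord) : scaleOf c H (α.fundamentalSeq j) i < scaleOf c H α i := by
  conv_rhs => rw [scaleOf, if_pos hi]
  refine (lt_add_one _).trans_le (le_max_of_le_right ?_)
  exact Ordinal.le_iSup (fun j => scaleOf c H (α.fundamentalSeq j) i + 1) j

theorem scaleOf_lt_ord (hc : ∀ i, (c i).IsRegular) (hH : ∀ α i, H α i < (c i).ord)
    (α : Ordinal.{u}) (i : ι) : scaleOf c H α i < (c i).ord := by
  induction α using WellFoundedLT.induction with
  | ind α ih =>
  have hlim := isSuccLimit_ord (hc i).aleph0_le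
  rw [scaleOf]
  refine max_lt (hlim.add_one_lt (hH α i)) ?_
  split_ifs with hα
  · apply lift_iSup_add_one_lt_of_lt_cof _ fun j => ih _ (α.fundamentalSeq j).2
    simpa [Cardinal.mk_Iio_ordinal, (hc i).lift.cof_ord, ← lift_cof] using hα
  · exact hlim.bot_lt

theorem scaleOf_eventually_lt (l : Filter ι) {κ : Ordinal.{u}}
    (hcof : ∀ α < κ, ∀ᶠ i in l, α.cof < c i) {α : Ordinal.{u}} (hα : α < κ) :
    ∀ β < α, ∀ᶠ i in l, scaleOf c H β i < scaleOf c H α i := by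
  induction α using WellFoundedLT.induction with
  | ind α ih =>
  intro β hβ
  obtain ⟨j, hj⟩ := exists_le_fundamentalSeq hβ
  set δ := (α.fundamentalSeq j : Ordinal)
  have hδα : δ < α := (α.fundamentalSeq j).2
  have hle : ∀ᶠ i in l, scaleOf c H β i ≤ scaleOf c H δ i := by
    rcases hj.eq_or_lt with hβδ | hβδ
    · exact .of_forall fun i => hβδ ▸ le_rfl
    · exact (ih δ hδα (hδα.trans hα) β hβδ).mono fun i => le_of_lt
  filter_upwards [hle, hcof α hα] with i hβδ hi
  exact hβδ.trans_lt (scaleOf_fundamentalSeq_lt c H hi j)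

end Scale

theorem stmt_0_general (κ : Cardinal.{0}) (hκ : ℵ₀ ≤ κ) (hsing : κ.ord.cof < κ)
    (hch : (2 : Cardinal) ^ κ = Order.succ κ)
    (A : Set Cardinal)
    (hreg : ∀ a ∈ A, a.IsRegular)
    (hbelow : ∀ a ∈ A, a < κ)
    (hcof : ∀ c < κ, ∃ a ∈ A, c < a) :
    ∃ f : Ordinal → (A → Ordinal),
      (∀ α < (Order.succ κ).ord, ∀ a : A, f α a < (a : Cardinal).ord) ∧
      (∀ α < (Order.succ κ).ord, ∀ β < (Order.succ κ).ord, α < β →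
        ∃ γ ∈ A, ∀ a : A, γ < (a : Cardinal) → f α a < f β a) ∧
      (∀ h : A → Ordinal, (∀ a : A, h a < (a : Cardinal).ord) →
        ∃ α < (Order.succ κ).ord, ∃ γ ∈ A, ∀ a : A, γ < (a : Cardinal) → h a < f α a) := by
  obtain ⟨a₀, ha₀, -⟩ := hcof 0 (aleph0_pos.trans_le hκ)
  have : Nonempty A := ⟨⟨a₀, ha₀⟩⟩
  set P := Set.univ.pi fun a : A => Iio (a : Cardinal).ord
  have hP : #P ≤ lift.{1} (Order.succ κ) := hch ▸ mk_pi_Iio_ord_le_two_power hκ hbelow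
  have hPne : P.Nonempty := ⟨fun _ => 0, fun a _ => ord_pos.2 (hreg a a.2).pos⟩
  obtain ⟨H, hHP, hHsurj⟩ := hPne.exists_surjOn_Iio_ord (μ := Order.succ κ) (by simpa using hP)
  have hcof_eventually : ∀ α < (Order.succ κ).ord, ∀ᶠ a : A in atTop, α.cof < a := by
    intro α hα
    obtain ⟨a₁, ha₁, hlt⟩ := hcof _ (cof_lt_of_lt_ord_succ hsing hα)
    exact eventually_atTop.2 ⟨⟨a₁, ha₁⟩, fun a ha => hlt.trans_le ha⟩
  refine ⟨scaleOf Subtype.val H, ?bounded, ?increasing, ?cofinal⟩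
  case bounded =>
    exact fun α _ a => scaleOf_lt_ord _ H (fun a => hreg a a.2) (fun α a => hHP α a trivial) α a
  case increasing =>
    intro α _ β hβ hαβ
    exact (scaleOf_eventually_lt _ H atTop hcof_eventually hβ α hαβ).exists_forall_gt_of_atTop
  case cofinal =>
    intro h hh
    obtain ⟨α, hα, rfl⟩ := hHsurj (fun a _ => hh a)
    exact ⟨α, hα, (Eventually.of_forall (lt_scaleOf _ H α)).exists_forall_gt_of_atTop⟩

/-- If κ is a singular cardinal with 2^κ = κ⁺ and A is a cofinal progressive
subset of κ consisting of regular cardinals, then there is a scale of length κ⁺ in ∏A. -/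
theorem stmt_0 (κ : Cardinal.{0}) (hκ : ℵ₀ ≤ κ) (hsing : κ.ord.cof < κ)
    (hch : (2 : Cardinal) ^ κ = Order.succ κ)
    (A : Set Cardinal)
    (hreg : ∀ a ∈ A, a.IsRegular)
    (hbelow : ∀ a ∈ A, a < κ)
    (hcof : ∀ c < κ, ∃ a ∈ A, c < a)
    (hprog : #A < Cardinal.lift.{1} (sInf A)) :
    ∃ f : Ordinal → (A → Ordinal),
      (∀ α < (Order.succ κ).ord, ∀ a : A, f α a < (a : Cardinal).ord) ∧
      (∀ α < (Order.succ κ).ord, ∀ β < (Order.succ κ).ord, α < β →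
        ∃ γ ∈ A, ∀ a : A, γ < (a : Cardinal) → f α a < f β a) ∧
      (∀ h : A → Ordinal, (∀ a : A, h a < (a : Cardinal).ord) →
        ∃ α < (Order.succ κ).ord, ∃ γ ∈ A, ∀ a : A, γ < (a : Cardinal) → h a < f α a) :=
  stmt_0_general κ hκ hsing hch A hreg hbelow hcof
end

section
/- Let A be a countably infinite set of ordinals, let λ be an uncountable regular cardinal, and let ⟨f_α : α < λ⟩ be a <*-increasing sequence of functions in A → Ord. Suppose ⟨h_ξ : ξ < λ⟩ is a <-pointwise-increasing sequence of functions in A → Ord that is cofinally interleaved with ⟨f_α : α < λ⟩ (for every α there is ξ with f_α <* h_ξ, and for every ξ there is α with h_ξ <* f_α). Then the function g defined by g(i) = sup{h_ξ(i) : ξ < λ} is an exact upper bound for ⟨f_α : α < λ⟩ with respect to <*, and cf(g(i)) = λ for every i ∈ A on which ⟨h_ξ(i) : ξ < λ⟩ is strictly increasing. -/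
/-!
Since `λ` is regular and uncountable, for `u <* g` the countably many indices `ξᵢ < λ` with
`u(i) < h_{ξᵢ}(i)` are bounded by a single `ξ < λ`; then `u <* h_ξ <* f_α` for some `α`.
The supremum of a strictly increasing `λ`-sequence of ordinals has cofinality `cf λ = λ`.
-/

open Cardinal Ordinal Set Filter

namespace Ordinal

universe u v

variable {ι : Type v} [Countable ι] {o : Ordinal.{u}} {h : Ordinal.{u} → ι → Ordinal.{u}}

theorem exists_forall_lt_apply_of_lt_iSup (ho : ℵ₀ < o.cof) (hmono : MonotoneOn h (Iio o))
    {v : ι → Ordinal.{u}} (hv : ∀ i, v i < ⨆ ξ : Iio o, h ξ i) : ∃ ξ < o, ∀ i, v i < h ξ i := by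
  choose ξ hξ using fun i => Ordinal.lt_iSup_iff.1 (hv i)
  have hι : Cardinal.lift.{u} #ι < (Ordinal.lift.{v} o).cof := by
    rw [← lift_cof]
    exact (lift_le_aleph0.2 mk_le_aleph0).trans_lt (aleph0_lt_lift.2 ho)
  have hsup : ⨆ i, (ξ i : Ordinal) < o := lift_iSup_lt_of_lt_cof hι fun i => (ξ i).2
  exact ⟨_, hsup, fun i =>
    (hξ i).trans_le (hmono (ξ i).2 hsup (Ordinal.le_iSup (fun i => (ξ i : Ordinal)) i) i)⟩

theorem exists_eventually_lt_apply_of_eventually_lt_iSup {l : Filter ι} (ho : ℵ₀ < o.cof)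
    (hmono : MonotoneOn h (Iio o)) {v : ι → Ordinal.{u}}
    (hv : ∀ᶠ i in l, v i < ⨆ ξ : Iio o, h ξ i) : ∃ ξ < o, ∀ᶠ i in l, v i < h ξ i := by
  obtain ⟨ξ, hξ, hvξ⟩ := exists_forall_lt_apply_of_lt_iSup
    (h := fun ξ (i : {i // v i < ⨆ ξ : Iio o, h ξ i}) => h ξ i)
    ho (fun _ hξ _ hζ hle i => hmono hξ hζ hle i) (fun i => i.2)
  exact ⟨ξ, hξ, hv.mono fun i hi => hvξ ⟨i, hi⟩⟩

end Ordinal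

theorem stmt_2_general (A : Set Ordinal) (hAc : A.Countable)
    (lam : Cardinal.{0}) (hreg : lam.IsRegular) (hunc : ℵ₀ < lam)
    (f h : Ordinal → A → Ordinal)
    (hhmono : ∀ ξ < lam.ord, ∀ ζ < lam.ord, ξ < ζ → ∀ i : A, h ξ i < h ζ i)
    (hint₁ : ∀ α < lam.ord, ∃ ξ < lam.ord, {i : A | ¬ f α i < h ξ i}.Finite)
    (hint₂ : ∀ ξ < lam.ord, ∃ α < lam.ord, {i : A | ¬ h ξ i < f α i}.Finite) :
    (∀ α < lam.ord, {i : A | ¬ f α i < (⨆ ξ : Set.Iio lam.ord, h ξ.1 i)}.Finite) ∧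
    (∀ u : A → Ordinal, {i : A | ¬ u i < (⨆ ξ : Set.Iio lam.ord, h ξ.1 i)}.Finite →
      ∃ α < lam.ord, {i : A | ¬ u i < f α i}.Finite) ∧
    (∀ i : A, (∀ ξ < lam.ord, ∀ ζ < lam.ord, ξ < ζ → h ξ i < h ζ i) →
      (⨆ ξ : Set.Iio lam.ord, h ξ.1 i).cof = lam) := by
  simp only [← eventually_cofinite] at hint₁ hint₂ ⊢
  have hmono : MonotoneOn h (Iio lam.ord) := fun ξ hξ ζ hζ hle i =>
    hle.eq_or_lt.elim (fun heq => heq ▸ le_rfl) fun hlt => (hhmono ξ hξ ζ hζ hlt i).le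
  have hA : Countable A := hAc.to_subtype
  have hcof : ℵ₀ < lam.ord.cof := by rwa [hreg.cof_ord]
  refine ⟨fun α hα => ?_, fun u hu => ?_, fun i hi => ?_⟩
  · obtain ⟨ξ, hξ, hfξ⟩ := hint₁ α hα
    exact hfξ.mono fun i hi =>
      hi.trans_le (Ordinal.le_iSup (fun ζ : Iio lam.ord => h ζ i) ⟨ξ, hξ⟩)
  · obtain ⟨ξ, hξ, huξ⟩ := exists_eventually_lt_apply_of_eventually_lt_iSup hcof hmono hu
    obtain ⟨α, hα, hξα⟩ := hint₂ ξ hξ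
    exact ⟨α, hα, (huξ.and hξα).mono fun i hi => hi.1.trans hi.2⟩
  · rw [cof_iSup_Iio (fun ξ ζ hlt => hi ξ.1 ξ.2 ζ.1 ζ.2 hlt)
      (isSuccLimit_ord hreg.aleph0_le).isSuccPrelimit, hreg.cof_ord]

/-- If a pointwise-increasing λ-sequence ⟨h_ξ⟩ is cofinally interleaved with a
`<*`-increasing λ-sequence ⟨f_α⟩ of functions on a countably infinite set A of ordinals, then
g(i) = sup_ξ h_ξ(i) is an exact upper bound for ⟨f_α⟩ with respect to `<*` (the mod-finite
domination order), and cf(g(i)) = λ at every i where ξ ↦ h_ξ(i) is strictly increasing. -/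
theorem stmt_2 (A : Set Ordinal) (hAc : A.Countable) (hAi : A.Infinite)
    (lam : Cardinal.{0}) (hreg : lam.IsRegular) (hunc : ℵ₀ < lam)
    (f h : Ordinal → A → Ordinal)
    (hf : ∀ α < lam.ord, ∀ β < lam.ord, α < β → {i : A | ¬ f α i < f β i}.Finite)
    (hhmono : ∀ ξ < lam.ord, ∀ ζ < lam.ord, ξ < ζ → ∀ i : A, h ξ i < h ζ i)
    (hint₁ : ∀ α < lam.ord, ∃ ξ < lam.ord, {i : A | ¬ f α i < h ξ i}.Finite)
    (hint₂ : ∀ ξ < lam.ord, ∃ α < lam.ord, {i : A | ¬ h ξ i < f α i}.Finite) :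
    (∀ α < lam.ord, {i : A | ¬ f α i < (⨆ ξ : Set.Iio lam.ord, h ξ.1 i)}.Finite) ∧
    (∀ u : A → Ordinal, {i : A | ¬ u i < (⨆ ξ : Set.Iio lam.ord, h ξ.1 i)}.Finite →
      ∃ α < lam.ord, {i : A | ¬ u i < f α i}.Finite) ∧
    (∀ i : A, (∀ ξ < lam.ord, ∀ ζ < lam.ord, ξ < ζ → h ξ i < h ζ i) →
      (⨆ ξ : Set.Iio lam.ord, h ξ.1 i).cof = lam) :=
  stmt_2_general A hAc lam hreg hunc f h hhmono hint₁ hint₂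
end

section
/- Suppose the bounding number 𝔟 equals ω₁. Let ⟨A_n : n < ω⟩ be a sequence of subsets of ω such that A_n ⊆ A_{n+1}, A_{n+1} \ A_n is infinite for each n, and ⋃_n A_n = ω. Then there exists a sequence ⟨X_α : α < ω₁⟩ of subsets of ω such that for all α < β < ω₁: (1) X_α ⊆* X_β (inclusion mod finite); (2) X_α ∩ A_n is finite for every n < ω; and (3) for any fixed <*-increasing unbounded family ⟨σ_α : α < ω₁⟩ in ω→ω, the set X_{α+1} ∩ (A_{n+1} \ (A_n ∪ σ_α(n+1))) is nonempty for every n < ω. -/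
open Cardinal Ordinal

/-- `u <* v`: eventual strict domination on `ℕ → ℕ`. -/
def ltStarN (u v : ℕ → ℕ) : Prop := {n | v n ≤ u n}.Finite

/-- The bounding number 𝔟: least size of an unbounded family in (ω→ω, <*). -/
noncomputable def boundingNumber : Cardinal.{0} :=
  sInf {c | ∃ F : Set (ℕ → ℕ), #F = c ∧ ∀ g : ℕ → ℕ, ∃ f ∈ F, ¬ ltStarN f g}

/-!
For every `α` and `n` fix a point `w α n` of the block `A (n + 1) \ A n` above `σ α (n + 1)`.
By recursion along `ω₁` build functions `τ α : ℕ → ℕ`, increasing mod finite, with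
`w α < τ (α + 1)` everywhere: take `max (τ β) (w β + 1)` at successors and, at a limit `α`,
diagonalise over an enumeration `e` of the countably many `γ < α` by
`τ α n = max_{i ≤ n} τ (e i) n`. Let `X α` consist of the points of each block
`A (n + 1) \ A n` below `τ α n`. Then `X α` meets `A n` only in the first `n` blocks, each
cut off finitely; `τ α ≤ τ β` mod finite gives `X α ⊆* X β`; and `X (α + 1)` contains `w α n`.
-/

open Set Filter

universe u

theorem Ordinal.countable_Iio_of_lt_ord_aleph_one {α : Ordinal.{u}} (hα : α < (aleph 1).ord) :
    (Iio α).Countable := by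
  rw [← le_aleph0_iff_set_countable, Cardinal.mk_Iio_ordinal, ← lift_aleph0.{u + 1, u},
    Cardinal.lift_le, ← Order.lt_succ_iff, Cardinal.succ_aleph0, ← lt_ord]
  exact hα

open Classical in
noncomputable def enumIio (α : Ordinal.{u}) : ℕ → Ordinal.{u} :=
  if h : (Iio α).Countable ∧ (Iio α).Nonempty then (h.1.exists_eq_range h.2).choose
  else fun _ => 0

theorem exists_enumIio_eq {α γ : Ordinal.{u}} (hα : α < (aleph 1).ord) (hγ : γ < α) :
    ∃ i, enumIio α i = γ := by
  have h : (Iio α).Countable ∧ (Iio α).Nonempty :=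
    ⟨countable_Iio_of_lt_ord_aleph_one hα, γ, hγ⟩
  have hrange : Iio α = range (enumIio α) := by
    rw [enumIio, dif_pos h]
    exact (h.1.exists_eq_range h.2).choose_spec
  exact hrange.subset hγ

section DominatingTower

variable (p : Ordinal.{u} → ℕ → ℕ)

noncomputable def dominatingTower (α : Ordinal.{u}) : ℕ → ℕ :=
  Ordinal.limitRecOn α (fun _ => 0)
    (fun β τ n => max (τ n) (p β n + 1))
    (fun α _ τ n => (Finset.range (n + 1)).sup
      fun i => if hi : enumIio α i < α then τ (enumIio α i) hi n else 0)

theorem dominatingTower_add_one (β : Ordinal.{u}) (n : ℕ) :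
    dominatingTower p (β + 1) n = max (dominatingTower p β n) (p β n + 1) := by
  rw [dominatingTower, limitRecOn_add_one]
  rfl

theorem lt_dominatingTower_add_one (β : Ordinal.{u}) (n : ℕ) :
    p β n < dominatingTower p (β + 1) n := by
  rw [dominatingTower_add_one]
  omega

theorem dominatingTower_le_add_one (β : Ordinal.{u}) (n : ℕ) :
    dominatingTower p β n ≤ dominatingTower p (β + 1) n := by
  rw [dominatingTower_add_one]
  exact le_max_left _ _

theorem dominatingTower_of_isSuccLimit {α : Ordinal.{u}} (hα : Order.IsSuccLimit α) (n : ℕ) :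
    dominatingTower p α n = (Finset.range (n + 1)).sup
      fun i => if enumIio α i < α then dominatingTower p (enumIio α i) n else 0 := by
  rw [dominatingTower, limitRecOn_limit _ _ _ _ hα]
  simp only [dite_eq_ite]
  rfl

theorem dominatingTower_enumIio_le {α : Ordinal.{u}} (hα : Order.IsSuccLimit α) {i n : ℕ}
    (hi : enumIio α i < α) (hin : i ≤ n) :
    dominatingTower p (enumIio α i) n ≤ dominatingTower p α n := by
  rw [dominatingTower_of_isSuccLimit p hα]
  refine le_trans (le_of_eq ?_) (Finset.le_sup (Finset.mem_range.2 (Nat.lt_succ_of_le hin)))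
  exact (if_pos hi).symm

theorem dominatingTower_eventuallyLE {α γ : Ordinal.{u}} (hα : α < (aleph 1).ord)
    (hγ : γ < α) : dominatingTower p γ ≤ᶠ[cofinite] dominatingTower p α := by
  induction α using Ordinal.limitRecOn generalizing γ with
  | zero => exact absurd hγ (not_lt_bot (a := γ))
  | add_one β ih =>
    have hstep : dominatingTower p β ≤ᶠ[cofinite] dominatingTower p (β + 1) :=
      Eventually.of_forall (dominatingTower_le_add_one p β)
    rcases (Order.lt_add_one_iff.1 hγ).lt_or_eq with hγβ | rfl
    · exact (ih ((lt_add_one β).trans hα) hγβ).trans hstep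
    · exact hstep
  | limit α hlim _ =>
    obtain ⟨i, rfl⟩ := exists_enumIio_eq hα hγ
    exact (eventually_ge_atTop i).filter_mono Nat.cofinite_eq_atTop.le |>.mono
      fun _ hin => dominatingTower_enumIio_le p hlim hγ hin

end DominatingTower

section BlockCut

variable (A : ℕ → Set ℕ)

def blockCut (f : ℕ → ℕ) : Set ℕ :=
  {m | ∃ n, m ∈ A (n + 1) \ A n ∧ m < f n}

theorem blockCut_diff_finite {f g : ℕ → ℕ} (hfg : f ≤ᶠ[cofinite] g) :
    (blockCut A f \ blockCut A g).Finite := by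
  refine ((eventually_cofinite.1 hfg).biUnion fun k _ => finite_Iio (f k)).subset ?_
  rintro m ⟨⟨k, hk, hmf⟩, hmg⟩
  have hgm : g k ≤ m := not_lt.1 fun h => hmg ⟨k, hk, h⟩
  exact mem_biUnion (show ¬ f k ≤ g k by omega) hmf

theorem blockCut_inter_finite (hA : Monotone A) (f : ℕ → ℕ) (n : ℕ) :
    (blockCut A f ∩ A n).Finite := by
  refine (finite_Iio ((Finset.range n).sup f)).subset ?_
  rintro m ⟨⟨k, ⟨-, hmk⟩, hmf⟩, hmn⟩
  have hkn : k < n := not_le.1 fun h => hmk (hA h hmn)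
  exact hmf.trans_le (Finset.le_sup (Finset.mem_range.2 hkn))

end BlockCut

theorem stmt_4_general
    (A : ℕ → Set ℕ) (hmono : ∀ n, A n ⊆ A (n + 1))
    (hinf : ∀ n, (A (n + 1) \ A n).Infinite)
    (σ : Ordinal → (ℕ → ℕ)) :
    ∃ X : Ordinal → Set ℕ,
      (∀ α < (aleph 1).ord, ∀ β < (aleph 1).ord, α < β → (X α \ X β).Finite) ∧
      (∀ α < (aleph 1).ord, ∀ n, (X α ∩ A n).Finite) ∧
      (∀ α < (aleph 1).ord, ∀ n,
        (X (α + 1) ∩ {m | m ∈ A (n + 1) ∧ m ∉ A n ∧ σ α (n + 1) ≤ m}).Nonempty) := by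
  choose w hwA hσw using fun (α : Ordinal) n => (hinf n).exists_gt (σ α (n + 1))
  refine ⟨fun α => blockCut A (dominatingTower w α), ?_, ?_, ?_⟩
  · exact fun α _ β hβ hαβ =>
      blockCut_diff_finite A (dominatingTower_eventuallyLE w hβ hαβ)
  · exact fun α _ n => blockCut_inter_finite A (monotone_nat_of_le_succ hmono) _ n
  · exact fun α _ n => ⟨w α n, ⟨n, hwA α n, lt_dominatingTower_add_one w α n⟩,
      (hwA α n).1, (hwA α n).2, (hσw α n).le⟩

/-- assuming 𝔟 = ω₁, given an increasing chain ⟨A_n⟩ covering ω with each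
A_{n+1} \ A_n infinite, and a fixed <*-increasing unbounded family ⟨σ_α : α < ω₁⟩, there is a
sequence ⟨X_α : α < ω₁⟩ of subsets of ω which is ⊆*-increasing, with X_α ∩ A_n always finite,
and with X_{α+1} meeting A_{n+1} \ (A_n ∪ σ_α(n+1)) for every n. -/
theorem stmt_4 (hb : boundingNumber = aleph 1)
    (A : ℕ → Set ℕ) (hmono : ∀ n, A n ⊆ A (n + 1))
    (hinf : ∀ n, (A (n + 1) \ A n).Infinite)
    (hcover : (⋃ n, A n) = Set.univ)
    (σ : Ordinal → (ℕ → ℕ))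
    (hσinc : ∀ α < (aleph 1).ord, ∀ β < (aleph 1).ord, α < β → ltStarN (σ α) (σ β))
    (hσunb : ∀ τ : ℕ → ℕ, ∃ α < (aleph 1).ord, ¬ ltStarN (σ α) τ) :
    ∃ X : Ordinal → Set ℕ,
      (∀ α < (aleph 1).ord, ∀ β < (aleph 1).ord, α < β → (X α \ X β).Finite) ∧
      (∀ α < (aleph 1).ord, ∀ n, (X α ∩ A n).Finite) ∧
      (∀ α < (aleph 1).ord, ∀ n,
        (X (α + 1) ∩ {m | m ∈ A (n + 1) ∧ m ∉ A n ∧ σ α (n + 1) ≤ m}).Nonempty) :=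
  stmt_4_general A hmono hinf σ
end

section
/- Assume 𝔟 = ω₁. Let ⟨A_n : n < ω⟩ be an increasing sequence of subsets of ω with each A_{n+1} \ A_n infinite and ⋃_n A_n = ω. Then there is a <*-increasing sequence ⟨f_α : α < ω₁⟩ of functions from ω to the ordinals such that: (a) for every n < ω, the constant function with value ω₁, restricted to A_n, is an exact upper bound for ⟨f_α ↾ A_n : α < ω₁⟩ with respect to the mod-finite order; but (b) for every σ ∈ ω→ω, setting B_σ = ⋃_n {i ∈ A_n : i ≥ i^n_{σ(n)}}, where ⟨i^n_k : k < ω⟩ enumerates A_n increasingly, the constant function ω₁ restricted to B_σ is NOT a <*-upper bound for ⟨f_α ↾ B_σ : α < ω₁⟩. -/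
open Cardinal Ordinal

/-- `u <* v` relativized to a set `S ⊆ ℕ` (mod finite domination on `S`). -/
def ltStarOn (S : Set ℕ) (u v : ℕ → Ordinal) : Prop := {i | i ∈ S ∧ ¬ u i < v i}.Finite

/-- `B_σ = ⋃_n {i ∈ A_n : i ≥ i^n_{σ(n)}}`, where `i^n_k` is the increasing enumeration
of `A n` (via `Nat.nth`). -/
def Bset (A : ℕ → Set ℕ) (σ : ℕ → ℕ) : Set ℕ :=
  ⋃ n, {i | i ∈ A n ∧ Nat.nth (· ∈ A n) (σ n) ≤ i}

lemma bN_mem : ∃ F : Set (ℕ → ℕ), #F = boundingNumber ∧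
    ∀ g : ℕ → ℕ, ∃ f ∈ F, ¬ ltStarN f g := by
  have hne : {c | ∃ F : Set (ℕ → ℕ), #F = c ∧ ∀ g : ℕ → ℕ, ∃ f ∈ F, ¬ ltStarN f g}.Nonempty := by
    refine ⟨#(Set.univ : Set (ℕ → ℕ)), Set.univ, rfl, fun g => ⟨g, trivial, ?_⟩⟩
    intro h
    have he : {n | g n ≤ g n} = Set.univ := by ext n; simp
    rw [ltStarN, he] at h
    exact Set.infinite_univ h
  exact csInf_mem hne

lemma bounded_of_countable (hb : boundingNumber = ℵ₁) (S : Set (ℕ → ℕ)) (hS : S.Countable) :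
    ∃ G : ℕ → ℕ, ∀ f ∈ S, ltStarN f G := by
  by_contra h
  push_neg at h
  have h1 : boundingNumber ≤ #S := csInf_le' ⟨S, rfl, fun g => h g⟩
  have h2 : #S < ℵ₁ := (countable_iff_lt_aleph_one S).mp hS
  rw [hb] at h1
  exact absurd (h1.trans_lt h2) (lt_irrefl _)

lemma Iio_countable {α : Ordinal.{u}} (hα : α < (ℵ₁ : Cardinal.{u}).ord) : (Set.Iio α).Countable := by
  rw [countable_iff_lt_aleph_one, Ordinal.mk_Iio_ordinal]
  exact Cardinal.lift_lt_aleph_one.mpr (Cardinal.lt_ord.mp hα)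

lemma exists_scale (hb : boundingNumber = ℵ₁) :
    ∃ g : Ordinal.{u} → ℕ → ℕ,
      (∀ γ α : Ordinal.{u}, γ < α → α < (ℵ₁ : Cardinal.{u}).ord → ltStarN (g γ) (g α)) ∧
      (∀ ψ : ℕ → ℕ, ∃ α < (ℵ₁ : Cardinal.{u}).ord, {n | ψ n ≤ g α n}.Infinite) := by
  classical
  obtain ⟨F, hF, hFu⟩ := bN_mem
  rw [hb] at hF
  have hne : Nonempty (F ≃ (Set.Iio (ℵ₁ : Cardinal.{u}).ord)) := by
    rw [← Cardinal.lift_mk_eq']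
    rw [Ordinal.mk_Iio_ordinal, card_ord, hF, Cardinal.lift_lift]
    simp [Cardinal.lift_aleph]
  obtain ⟨eqv⟩ := hne
  set e : Ordinal → ℕ → ℕ := fun α =>
    if h : α < (ℵ₁ : Cardinal.{u}).ord then ((eqv.symm ⟨α, h⟩ : F) : ℕ → ℕ) else fun _ => 0 with he
  have hesurj : ∀ f ∈ F, ∃ α < (ℵ₁ : Cardinal.{u}).ord, e α = f := by
    intro f hf
    refine ⟨(eqv ⟨f, hf⟩ : Ordinal), (eqv ⟨f, hf⟩).2, ?_⟩
    rw [he]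
    beta_reduce
    rw [dif_pos (show ((eqv ⟨f, hf⟩ : Set.Iio (ℵ₁ : Cardinal.{u}).ord) : Ordinal) < (ℵ₁ : Cardinal.{u}).ord from (eqv ⟨f, hf⟩).2)]
    show ((eqv.symm (eqv ⟨f, hf⟩) : F) : ℕ → ℕ) = f
    rw [Equiv.symm_apply_apply]
  have key : ∀ (α : Ordinal) (prev : ∀ γ, γ < α → ℕ → ℕ), α < (ℵ₁ : Cardinal.{u}).ord →
      ∃ G : ℕ → ℕ, (∀ γ (h : γ < α), ltStarN (prev γ h) G) ∧ ltStarN (e α) G := by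
    intro α prev hα
    have hIio := Iio_countable hα
    haveI := hIio.to_subtype
    have hcnt : (insert (e α) {u | ∃ γ, ∃ h : γ < α, u = prev γ h}).Countable := by
      refine Set.Countable.insert _ ?_
      refine (Set.countable_range (fun γ : Set.Iio α => prev γ.1 γ.2)).mono ?_
      rintro u ⟨γ, h, rfl⟩
      exact ⟨⟨γ, h⟩, rfl⟩
    obtain ⟨G, hG⟩ := bounded_of_countable hb _ hcnt
    exact ⟨G, fun γ h => hG _ (Set.mem_insert_iff.mpr (Or.inr ⟨γ, h, rfl⟩)),
      hG _ (Set.mem_insert _ _)⟩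
  let g : Ordinal → ℕ → ℕ := Ordinal.lt_wf.fix (fun α IH =>
    if h : α < (ℵ₁ : Cardinal.{u}).ord then Classical.choose (key α IH h) else fun _ => 0)
  have hg : ∀ α, g α = if h : α < (ℵ₁ : Cardinal.{u}).ord then
      Classical.choose (key α (fun γ _ => g γ) h) else fun _ => 0 :=
    fun α => WellFounded.fix_eq _ _ α
  have hspec : ∀ α, α < (ℵ₁ : Cardinal.{u}).ord →
      (∀ γ (h : γ < α), ltStarN (g γ) (g α)) ∧ ltStarN (e α) (g α) := by
    intro α hα
    have h1 := Classical.choose_spec (key α (fun γ _ => g γ) hα)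
    rw [hg α, dif_pos hα]
    exact h1
  refine ⟨g, fun γ α hγα hα => (hspec α hα).1 γ hγα, ?_⟩
  intro ψ
  obtain ⟨f, hf, hfu⟩ := hFu ψ
  obtain ⟨α, hα, hefα⟩ := hesurj f hf
  refine ⟨α, hα, ?_⟩
  have h2 : ltStarN (e α) (g α) := (hspec α hα).2
  rw [hefα] at h2
  have hinf : {n | ψ n ≤ f n}.Infinite := hfu
  refine ((hinf.diff h2).mono ?_)
  rintro n ⟨h3, h4⟩
  simp only [Set.mem_setOf_eq, not_le] at h3 h4 ⊢
  exact le_of_lt (lt_of_le_of_lt h3 h4)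

lemma exists_conv : ∃ c : Ordinal.{u} → Ordinal.{v},
    (∀ α β : Ordinal.{u}, α < (ℵ₁ : Cardinal.{u}).ord → β < (ℵ₁ : Cardinal.{u}).ord →
      α < β → c α < c β) ∧
    (∀ α < (ℵ₁ : Cardinal.{u}).ord, c α < (ℵ₁ : Cardinal.{v}).ord) ∧
    (∀ β < (ℵ₁ : Cardinal.{v}).ord, ∃ α < (ℵ₁ : Cardinal.{u}).ord, c α = β) := by
  classical
  have hL : Ordinal.lift.{v} ((ℵ₁ : Cardinal.{u}).ord) =
      Ordinal.lift.{u} ((ℵ₁ : Cardinal.{v}).ord) := by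
    rw [Cardinal.lift_ord, Cardinal.lift_ord, Cardinal.lift_aleph, Cardinal.lift_aleph]
    simp
  have hkey : ∀ α : Ordinal.{u}, α < (ℵ₁ : Cardinal.{u}).ord →
      Ordinal.lift.{v} α ∈ Set.range Ordinal.lift.{u} := by
    intro α hα
    refine Ordinal.mem_range_lift_of_le (a := (ℵ₁ : Cardinal.{v}).ord) ?_
    rw [← hL]
    exact (Ordinal.lift_lt.mpr hα).le
  set c : Ordinal.{u} → Ordinal.{v} := fun α =>
    if h : α < (ℵ₁ : Cardinal.{u}).ord then Classical.choose (hkey α h) else 0 with hc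
  have hspec : ∀ α (h : α < (ℵ₁ : Cardinal.{u}).ord),
      Ordinal.lift.{u} (c α) = Ordinal.lift.{v} α := by
    intro α h
    have := Classical.choose_spec (hkey α h)
    rw [hc]
    beta_reduce
    rw [dif_pos h]
    exact this
  refine ⟨c, ?_, ?_, ?_⟩
  · intro α β hα hβ hαβ
    rw [← Ordinal.lift_lt.{u,v}, hspec α hα, hspec β hβ]
    exact Ordinal.lift_lt.mpr hαβ
  · intro α hα
    rw [← Ordinal.lift_lt.{u,v}, hspec α hα, ← hL]
    exact Ordinal.lift_lt.mpr hα
  · intro β hβ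
    have h1 : Ordinal.lift.{u} β ∈ Set.range Ordinal.lift.{v} := by
      refine Ordinal.mem_range_lift_of_le (a := (ℵ₁ : Cardinal.{u}).ord) ?_
      rw [hL]
      exact (Ordinal.lift_lt.mpr hβ).le
    obtain ⟨α, hα⟩ := h1
    have hα' : α < (ℵ₁ : Cardinal.{u}).ord := by
      rw [← Ordinal.lift_lt.{v,u}, hα, hL]
      exact Ordinal.lift_lt.mpr hβ
    refine ⟨α, hα', ?_⟩
    rw [← Ordinal.lift_inj.{u,v}, hspec α hα', hα]

/-- if 𝔟 = ω₁, there is a <*-increasing ω₁-sequence of ordinal functions on ω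
such that the constant function ω₁ restricted to each A_n is an exact upper bound of the
restrictions, but for every σ the constant function ω₁ restricted to B_σ is not even a
<*-upper bound of the restrictions to B_σ. -/
theorem stmt_5 (hb : boundingNumber = aleph 1)
    (A : ℕ → Set ℕ) (hmono : ∀ n, A n ⊆ A (n + 1))
    (hinf : ∀ n, (A (n + 1) \ A n).Infinite)
    (hcover : (⋃ n, A n) = Set.univ) :
    ∃ f : Ordinal → ℕ → Ordinal,
      (∀ α < (aleph 1).ord, ∀ β < (aleph 1).ord, α < β →
        {i : ℕ | ¬ f α i < f β i}.Finite) ∧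
      (∀ n, (∀ α < (aleph 1).ord, ltStarOn (A n) (f α) (fun _ => (aleph 1).ord)) ∧
        (∀ u : ℕ → Ordinal, ltStarOn (A n) u (fun _ => (aleph 1).ord) →
          ∃ α < (aleph 1).ord, ltStarOn (A n) u (f α))) ∧
      (∀ σ : ℕ → ℕ, ∃ α < (aleph 1).ord,
        ¬ ltStarOn (Bset A σ) (f α) (fun _ => (aleph 1).ord)) := by
  classical
  obtain ⟨g, hgmono, hgunb⟩ := exists_scale hb
  obtain ⟨c, hcmono, hclt, hcsurj⟩ := exists_conv
  have hA : Monotone A := monotone_nat_of_le_succ hmono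
  have hex : ∀ i : ℕ, ∃ n, i ∈ A n := by
    intro i
    have : i ∈ ⋃ n, A n := hcover ▸ Set.mem_univ i
    exact Set.mem_iUnion.mp this
  let lvl : ℕ → ℕ := fun i => Nat.find (hex i)
  have hlvl_mem : ∀ i, i ∈ A (lvl i) := fun i => Nat.find_spec (hex i)
  have hlvl_min : ∀ i n, i ∈ A n → lvl i ≤ n := fun i n h => Nat.find_min' _ h
  let P : Ordinal → ℕ → Prop :=
    fun α i => Nat.count (· ∈ A (lvl i)) i < g α (lvl i)
  let f : Ordinal → ℕ → Ordinal :=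
    fun α i => if P α i then (aleph 1).ord + c α else c α
  have hPdef : ∀ α i, P α i ↔ Nat.count (· ∈ A (lvl i)) i < g α (lvl i) :=
    fun _ _ => Iff.rfl
  have hfdef : ∀ α i, f α i = if P α i then (aleph 1).ord + c α else c α :=
    fun _ _ => rfl
  have hfin1 : ∀ m cc, {i | i ∈ A m ∧ Nat.count (· ∈ A m) i < cc}.Finite := by
    intro m cc
    refine Set.Finite.of_finite_image (f := Nat.count (· ∈ A m)) ?_ ?_
    · refine (Set.finite_Iio cc).subset ?_
      rintro _ ⟨i, ⟨_, hi⟩, rfl⟩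
      exact hi
    · intro i hi j hj hij
      exact Nat.count_injective hi.1 hj.1 hij
  have hEfin : ∀ α n, {i | i ∈ A n ∧ P α i}.Finite := by
    intro α n
    have hsub : {i | i ∈ A n ∧ P α i} ⊆
        ⋃ m ∈ Finset.range (n + 1), {i | i ∈ A m ∧ Nat.count (· ∈ A m) i < g α m} := by
      rintro i ⟨hiA, hPi⟩
      refine Set.mem_iUnion₂.mpr ⟨lvl i, ?_, hlvl_mem i, hPi⟩
      simp only [Finset.mem_range, Nat.lt_succ_iff]
      exact hlvl_min i n hiA
    exact (Set.Finite.biUnion (Finset.finite_toSet _) fun m _ => hfin1 m _).subset hsub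
  have hfge : ∀ α i, c α ≤ f α i := by
    intro α i
    rw [hfdef]
    by_cases h : P α i
    · rw [if_pos h]
      exact le_add_self
    · rw [if_neg h]
  refine ⟨f, ?_, ?_, ?_⟩
  · -- increasing
    intro α hα β hβ hαβ
    have hsub : {i : ℕ | ¬ f α i < f β i} ⊆ {i | P α i ∧ ¬ P β i} := by
      intro i hi
      simp only [Set.mem_setOf_eq] at hi ⊢
      by_contra hcon
      apply hi
      rw [hfdef α i, hfdef β i]
      by_cases h1 : P α i <;> by_cases h2 : P β i
      · rw [if_pos h1, if_pos h2]
        exact (add_lt_add_iff_left _).mpr (hcmono α β hα hβ hαβ)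
      · exact absurd ⟨h1, h2⟩ hcon
      · rw [if_neg h1, if_pos h2]
        exact lt_of_lt_of_le (hclt α hα) le_self_add
      · rw [if_neg h1, if_neg h2]
        exact hcmono α β hα hβ hαβ
    have hD : {m | g β m ≤ g α m}.Finite := hgmono α β hαβ hβ
    have hsub2 : {i | P α i ∧ ¬ P β i} ⊆
        ⋃ m ∈ hD.toFinset, {i | i ∈ A m ∧ Nat.count (· ∈ A m) i < g α m} := by
      rintro i ⟨h1, h2⟩
      rw [hPdef] at h1 h2
      push_neg at h2
      refine Set.mem_iUnion₂.mpr ⟨lvl i, ?_, hlvl_mem i, h1⟩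
      simp only [Set.Finite.mem_toFinset, Set.mem_setOf_eq]
      exact le_of_lt (lt_of_le_of_lt h2 h1)
    exact (((Set.Finite.biUnion (Finset.finite_toSet _)
      fun m _ => hfin1 m _).subset hsub2).subset hsub)
  · -- exact upper bound on each A n
    intro n
    constructor
    · intro α hα
      refine Set.Finite.subset (hEfin α n) ?_
      rintro i ⟨hiA, hilt⟩
      refine ⟨hiA, ?_⟩
      by_contra hcon
      apply hilt
      show f α i < (aleph 1).ord
      rw [hfdef, if_neg hcon]
      exact hclt α hα
    · intro u hu
      have hu' : {i | i ∈ A n ∧ ¬ u i < (aleph 1).ord}.Finite := hu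
      set v : ℕ → Ordinal := fun i =>
        if i ∈ A n ∧ u i < (aleph 1).ord then u i + 1 else 0 with hv
      have hvlt : ∀ i, v i < (aleph 1).ord := by
        intro i
        rw [hv]
        beta_reduce
        by_cases h : i ∈ A n ∧ u i < (aleph 1).ord
        · rw [if_pos h, ← Order.succ_eq_add_one]
          exact (Cardinal.isSuccLimit_ord (aleph0_le_aleph 1)).succ_lt h.2
        · rw [if_neg h]
          exact (Cardinal.isSuccLimit_ord (aleph0_le_aleph 1)).pos
      have hα₀ : iSup v < (aleph 1).ord := by
        refine Ordinal.iSup_lt_ord_lift ?_ hvlt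
        rw [Cardinal.isRegular_aleph_one.cof_eq, Cardinal.mk_nat, Cardinal.lift_aleph0]
        exact aleph0_lt_aleph_one
      obtain ⟨α, hαlt, hcα⟩ := hcsurj (iSup v) hα₀
      refine ⟨α, hαlt, ?_⟩
      refine Set.Finite.subset hu' ?_
      rintro i ⟨hiA, hilt⟩
      refine ⟨hiA, ?_⟩
      by_contra hcon
      apply hilt
      show u i < f α i
      have h1 : u i < v i := by
        rw [hv]
        beta_reduce
        rw [if_pos ⟨hiA, hcon⟩, Ordinal.add_one_eq_succ]
        exact Order.lt_succ _
      have h2 : v i ≤ iSup v := le_ciSup (Ordinal.bddAbove_range v) i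
      calc u i < v i := h1
        _ ≤ iSup v := h2
        _ = c α := hcα.symm
        _ ≤ f α i := hfge α i
  · -- not bounded on B_σ
    intro σ
    have hjex : ∀ m, ∃ j, j ∈ A (m + 1) \ A m ∧
        Nat.nth (· ∈ A (m + 1)) (σ (m + 1)) ≤ j := by
      intro m
      obtain ⟨j, hj1, hj2⟩ := (hinf m).exists_gt (Nat.nth (· ∈ A (m + 1)) (σ (m + 1)))
      exact ⟨j, hj1, le_of_lt hj2⟩
    choose j hjmem hjge using hjex
    let ψ : ℕ → ℕ := fun m => match m with
      | 0 => 0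
      | (k + 1) => Nat.count (· ∈ A (k + 1)) (j k) + 1
    have hψdef : ∀ k, ψ (k + 1) = Nat.count (· ∈ A (k + 1)) (j k) + 1 := fun _ => rfl
    obtain ⟨α, hα, hT⟩ := hgunb ψ
    refine ⟨α, hα, ?_⟩
    intro hS
    have hS' : {i | i ∈ Bset A σ ∧ ¬ f α i < (aleph 1).ord}.Finite := hS
    have hlvlj : ∀ k, lvl (j k) = k + 1 := by
      intro k
      have h1 : lvl (j k) ≤ k + 1 := hlvl_min _ _ (hjmem k).1
      have h2 : ¬ lvl (j k) ≤ k := fun h => (hjmem k).2 (hA h (hlvl_mem (j k)))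
      omega
    have hjS : ∀ k, ψ (k + 1) ≤ g α (k + 1) →
        j k ∈ {i | i ∈ Bset A σ ∧ ¬ f α i < (aleph 1).ord} := by
      intro k hk
      have hPj : P α (j k) := by
        rw [hPdef, hlvlj k]
        calc Nat.count (· ∈ A (k + 1)) (j k) < ψ (k + 1) := by rw [hψdef]; omega
          _ ≤ g α (k + 1) := hk
      constructor
      · exact Set.mem_iUnion.mpr ⟨k + 1, (hjmem k).1, hjge k⟩
      · rw [hfdef, if_pos hPj]
        exact not_lt.mpr le_self_add
    have hT' : {k | ψ (k + 1) ≤ g α (k + 1)}.Finite := by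
      refine Set.Finite.of_finite_image (f := j) (hS'.subset ?_) ?_
      · rintro _ ⟨k, hk, rfl⟩
        exact hjS k hk
      · intro a ha b hb hab
        have h3 := congrArg lvl hab
        rw [hlvlj a, hlvlj b] at h3
        omega
    apply hT
    have hsub : {n | ψ n ≤ g α n} ⊆
        insert 0 ((· + 1) '' {k | ψ (k + 1) ≤ g α (k + 1)}) := by
      intro n hn
      match n with
      | 0 => exact Set.mem_insert _ _
      | (k + 1) => exact Set.mem_insert_iff.mpr (Or.inr ⟨k, hn, rfl⟩)
    exact ((hT'.image _).insert 0).subset hsub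
end

section
/- Let λ be a regular uncountable cardinal with λ < 𝔟. Let ⟨A_n : n < ω⟩ be an ⊆-increasing sequence of infinite subsets of ω with union A, and let ⟨f_α : α < λ⟩ be a <*-increasing sequence in A → Ord such that for each n, ⟨f_α ↾ A_n : α < λ⟩ has an exact upper bound g_n with cf(g_n(i)) = λ for all i ∈ A_n. Then there is a set B ⊆ A with A_n ⊆* B for all n such that ⟨f_α ↾ B : α < λ⟩ has an exact upper bound g with cf(g(i)) = λ for all i ∈ B. -/
open Cardinal Ordinal

/-!
The exact upper bounds `g n` agree mod finite on the overlaps of their domains (an exact upper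
bound is unique mod finite), so they glue to a single `G` that is an exact upper bound on every
`A n`. Fix in each `G i` a monotone cofinal ladder of length `λ`. A rung of the ladders lies below
`G` on every `A n`, hence below some `f β` on each `A n`, and, `λ` being regular uncountable, below
one `f β` on all of them. For each of the `λ` rungs and each `α < λ`, the finite sets of exceptions
on the `A n` are bounded by a function `ℕ → ℕ`; as `λ < 𝔟` a single `H` eventually dominates all
of them, and `B = ⋃ n, A n ∩ [H n, ∞)` contains each `A n` mod finite while every exception set
meets it finitely. On `B`, a function below `G` is pointwise below some rung; these countably
many rungs are bounded by one rung, so the function is below the corresponding `f β`.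
-/

open Filter Set

theorem ltStarN_iff_eventually {u v : ℕ → ℕ} : ltStarN u v ↔ ∀ᶠ n in atTop, u n < v n := by
  simp [ltStarN, ← Nat.cofinite_eq_atTop, eventually_cofinite]

theorem ltStarOn_iff_eventually {S : Set ℕ} {u v : ℕ → Ordinal} :
    ltStarOn S u v ↔ ∀ᶠ i in atTop, i ∈ S → u i < v i := by
  simp [ltStarOn, ← Nat.cofinite_eq_atTop, eventually_cofinite]

theorem ltStarOn.mono {S T : Set ℕ} {u v : ℕ → Ordinal} (h : ltStarOn T u v) (hST : S ⊆ T) :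
    ltStarOn S u v :=
  h.subset fun _ ⟨hi, hlt⟩ => ⟨hST hi, hlt⟩

theorem ltStarOn.trans {S : Set ℕ} {u v w : ℕ → Ordinal} (huv : ltStarOn S u v)
    (hvw : ltStarOn S v w) : ltStarOn S u w := by
  rw [ltStarOn_iff_eventually] at *
  filter_upwards [huv, hvw] with i h₁ h₂ hi using (h₁ hi).trans (h₂ hi)

theorem ltStarOn.congr_right {S : Set ℕ} {u v w : ℕ → Ordinal} (h : ltStarOn S u v)
    (hvw : ∀ᶠ i in atTop, i ∈ S → v i = w i) : ltStarOn S u w := by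
  rw [ltStarOn_iff_eventually] at *
  filter_upwards [h, hvw] with i hlt heq hi using heq hi ▸ hlt hi

theorem exists_ltStarN_of_lift_mk_lt_boundingNumber {ι : Type*} (F : ι → ℕ → ℕ)
    (hι : lift.{0} #ι < lift boundingNumber) : ∃ H, ∀ x, ltStarN (F x) H := by
  by_contra! hF
  have hb : boundingNumber ≤ #(range F) :=
    csInf_le' ⟨range F, rfl, fun H => let ⟨x, hx⟩ := hF H; ⟨F x, ⟨x, rfl⟩, hx⟩⟩
  exact (lift_le.2 hb).trans mk_range_le_lift |>.not_gt hι

theorem exists_almost_superset_eventually_of_lift_mk_lt_boundingNumber {ι : Type*}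
    (hι : lift.{0} #ι < lift boundingNumber) (A : ℕ → Set ℕ) (P : ι → ℕ → Prop)
    (hP : ∀ x n, ∀ᶠ i in atTop, i ∈ A n → P x i) :
    ∃ B ⊆ ⋃ n, A n, (∀ n, (A n \ B).Finite) ∧ ∀ x, ∀ᶠ i in atTop, i ∈ B → P x i := by
  choose K hK using fun x n => eventually_atTop.1 (hP x n)
  obtain ⟨H, hH⟩ := exists_ltStarN_of_lift_mk_lt_boundingNumber K hι
  refine ⟨{i | ∃ n, i ∈ A n ∧ H n ≤ i}, fun i ⟨n, hi, _⟩ => mem_iUnion.2 ⟨n, hi⟩,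
    fun n => (finite_Iio (H n)).subset fun i ⟨hi, hiB⟩ => not_le.1 fun h => hiB ⟨n, hi, h⟩,
    fun x => ?_⟩
  obtain ⟨N, hN⟩ := eventually_atTop.1 (ltStarN_iff_eventually.1 (hH x))
  refine eventually_atTop.2 ⟨(Finset.range N).sup (K x), fun i hiM ⟨n, hi, hHi⟩ => hK x n i ?_ hi⟩
  rcases lt_or_ge n N with hn | hn
  · exact (Finset.le_sup (Finset.mem_range.2 hn)).trans hiM
  · exact (hN n hn).le.trans hHi

def IsUpperBoundOn (S : Set ℕ) (f : Ordinal → ℕ → Ordinal) (κ : Ordinal) (g : ℕ → Ordinal) :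
    Prop :=
  ∀ α < κ, ltStarOn S (f α) g

def IsExactUpperBoundOn (S : Set ℕ) (f : Ordinal → ℕ → Ordinal) (κ : Ordinal)
    (g : ℕ → Ordinal) : Prop :=
  IsUpperBoundOn S f κ g ∧ ∀ u, ltStarOn S u g → ∃ α < κ, ltStarOn S u (f α)

namespace IsExactUpperBoundOn

variable {S T : Set ℕ} {f : Ordinal → ℕ → Ordinal} {κ : Ordinal} {g h : ℕ → Ordinal}

theorem congr (hg : IsExactUpperBoundOn S f κ g) (hgh : ∀ᶠ i in atTop, i ∈ S → h i = g i) :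
    IsExactUpperBoundOn S f κ h :=
  ⟨fun α hα => (hg.1 α hα).congr_right (hgh.mono fun _ he hi => (he hi).symm),
    fun u hu => hg.2 u (hu.congr_right hgh)⟩

theorem eventually_le (hκ : 0 < κ) (hg : IsExactUpperBoundOn S f κ g)
    (hh : IsUpperBoundOn T f κ h) : ∀ᶠ i in atTop, i ∈ S → i ∈ T → g i ≤ h i := by
  -- `u` agrees with `h` where `h < g`, and lies below `g` elsewhere because `f 0` does.
  let u i := if h i < g i then h i else f 0 i
  have hu : ltStarOn S u g := by
    refine ltStarOn_iff_eventually.2 ?_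
    filter_upwards [ltStarOn_iff_eventually.1 (hg.1 0 hκ)] with i hf hi
    unfold u
    split_ifs with hlt
    exacts [hlt, hf hi]
  obtain ⟨α, hα, huf⟩ := hg.2 u hu
  filter_upwards [ltStarOn_iff_eventually.1 huf, ltStarOn_iff_eventually.1 (hh α hα)]
    with i hu hf hiS hiT
  by_contra! hlt
  have : u i = h i := if_pos hlt
  exact (this ▸ hu hiS).trans (hf hiT) |>.false

theorem eventually_eq (hκ : 0 < κ) (hg : IsExactUpperBoundOn S f κ g)
    (hh : IsExactUpperBoundOn T f κ h) : ∀ᶠ i in atTop, i ∈ S → i ∈ T → g i = h i := by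
  filter_upwards [hg.eventually_le hκ hh.1, hh.eventually_le hκ hg.1] with i h₁ h₂ hiS hiT
  exact (h₁ hiS hiT).antisymm (h₂ hiT hiS)

end IsExactUpperBoundOn

theorem exists_glue_of_pairwise_eventually_eq {β : Type*} (A : ℕ → Set ℕ) (g : ℕ → ℕ → β)
    (hg : ∀ m n, ∀ᶠ i in atTop, i ∈ A m → i ∈ A n → g m i = g n i) :
    ∃ G : ℕ → β, (∀ n, ∀ᶠ i in atTop, i ∈ A n → G i = g n i) ∧
      ∀ i ∈ ⋃ n, A n, ∃ n, i ∈ A n ∧ G i = g n i := by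
  classical
  refine ⟨fun i => if h : ∃ n, i ∈ A n then g (Nat.find h) i else g 0 i, fun n => ?_,
    fun i hi => ?_⟩
  · filter_upwards [(eventually_all_finite (finite_Iic n)).2 fun m _ => hg m n] with i hg hi
    have h : ∃ n, i ∈ A n := ⟨n, hi⟩
    rw [dif_pos h]
    exact hg _ (Nat.find_min' h hi) (Nat.find_spec h) hi
  · have h : ∃ n, i ∈ A n := mem_iUnion.1 hi
    exact ⟨Nat.find h, Nat.find_spec h, dif_pos h⟩

theorem exists_monotone_cofinal_of_cof_eq {o : Ordinal} {κ : Cardinal} (h : o.cof = κ) :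
    ∃ L : Iio κ.ord → Ordinal, Monotone L ∧ (∀ x, L x < o) ∧ ∀ a < o, ∃ x, a ≤ L x := by
  obtain ⟨F, hF⟩ := exists_isFundamentalSeq (congrArg ord h)
  refine ⟨fun x => F x, fun x y hxy => hF.strictMono.monotone hxy, fun x => (F x).2,
    fun a ha => ?_⟩
  obtain ⟨_, ⟨x, rfl⟩, hx⟩ := hF.isCofinal_range ⟨a, ha⟩
  exact ⟨x, hx⟩

theorem exists_lt_ord_forall_ltStarOn {κ : Cardinal} (hreg : κ.IsRegular) (hunc : ℵ₀ < κ)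
    {A : ℕ → Set ℕ} {f : Ordinal → ℕ → Ordinal}
    (hf : ∀ α < κ.ord, ∀ β < κ.ord, α < β → ltStarOn (⋃ n, A n) (f α) (f β))
    {u : ℕ → Ordinal} (hu : ∀ n, ∃ α < κ.ord, ltStarOn (A n) u (f α)) :
    ∃ β < κ.ord, ∀ n, ltStarOn (A n) u (f β) := by
  choose α hα huα using hu
  have hsup : ⨆ n, α n < κ.ord := lift_iSup_lt_of_lt_cof (by simpa [hreg.cof_ord]) hα
  have hβ : Order.succ (⨆ n, α n) < κ.ord := (isSuccLimit_ord hreg.aleph0_le).succ_lt hsup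
  refine ⟨_, hβ, fun n => (huα n).trans ((hf _ (hα n) _ hβ ?_).mono (subset_iUnion A n))⟩
  exact Order.lt_succ_of_le (Ordinal.le_iSup α n)

theorem exists_almost_superset_isExactUpperBoundOn {κ : Cardinal.{0}} (hreg : κ.IsRegular)
    (hunc : ℵ₀ < κ) (hlt : κ < boundingNumber) {A : ℕ → Set ℕ} {f : Ordinal → ℕ → Ordinal}
    (hf : ∀ α < κ.ord, ∀ β < κ.ord, α < β → ltStarOn (⋃ n, A n) (f α) (f β))
    {G : ℕ → Ordinal} (hG : ∀ n, IsExactUpperBoundOn (A n) f κ.ord G)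
    (hcof : ∀ i ∈ ⋃ n, A n, (G i).cof = κ) :
    ∃ B ⊆ ⋃ n, A n, (∀ n, (A n \ B).Finite) ∧ IsExactUpperBoundOn B f κ.ord G := by
  choose! L hLmono hLlt hLcof using fun i hi => exists_monotone_cofinal_of_cof_eq (hcof i hi)
  have hrung (x : Iio κ.ord) : ∃ β < κ.ord, ∀ n, ltStarOn (A n) (fun i => L i x) (f β) :=
    exists_lt_ord_forall_ltStarOn hreg hunc hf fun n => (hG n).2 _ <|
      finite_empty.subset fun i ⟨hi, hnlt⟩ => hnlt (hLlt i (mem_iUnion.2 ⟨n, hi⟩) x)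
  choose β hβ hLβ using hrung
  obtain ⟨B, hBU, hAB, hB⟩ := exists_almost_superset_eventually_of_lift_mk_lt_boundingNumber
    (ι := Iio κ.ord) (by simpa [Cardinal.mk_Iio_ordinal] using hlt) A
    (fun x i => L i x < f (β x) i ∧ f x i < G i) fun x n => by
      filter_upwards [ltStarOn_iff_eventually.1 (hLβ x n),
        ltStarOn_iff_eventually.1 ((hG n).1 x x.2)] with i h₁ h₂ hi using ⟨h₁ hi, h₂ hi⟩
  refine ⟨B, hBU, hAB, fun α hα => ltStarOn_iff_eventually.2 ((hB ⟨α, hα⟩).mono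
    fun i h hi => (h hi).2), fun u hu => ?_⟩
  have : Nonempty (Iio κ.ord) := ⟨⟨0, ord_pos.2 (aleph0_pos.trans hunc)⟩⟩
  choose! x hx using fun i (hi : i ∈ B) (hui : u i < G i) => hLcof i (hBU hi) (u i) hui
  have hsup : ⨆ i, (x i).1 < κ.ord :=
    lift_iSup_lt_of_lt_cof (by simpa [hreg.cof_ord]) fun i => (x i).2
  set xs : Iio κ.ord := ⟨_, hsup⟩
  refine ⟨β xs, hβ xs, ltStarOn_iff_eventually.2 ?_⟩
  filter_upwards [ltStarOn_iff_eventually.1 hu, hB xs] with i hu hP hi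
  calc u i ≤ L i (x i) := hx i hi (hu hi)
    _ ≤ L i xs := hLmono i (hBU hi) (Ordinal.le_iSup (fun i => (x i).1) i)
    _ < f (β xs) i := (hP hi).1

theorem stmt_6_general (lam : Cardinal.{0}) (hreg : lam.IsRegular) (hunc : ℵ₀ < lam)
    (hlt : lam < boundingNumber)
    (A : ℕ → Set ℕ)
    (f : Ordinal → ℕ → Ordinal)
    (hf : ∀ α < lam.ord, ∀ β < lam.ord, α < β → ltStarOn (⋃ n, A n) (f α) (f β))
    (g : ℕ → ℕ → Ordinal)
    (hub : ∀ n, ∀ α < lam.ord, ltStarOn (A n) (f α) (g n))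
    (hexact : ∀ n, ∀ u : ℕ → Ordinal, ltStarOn (A n) u (g n) →
      ∃ α < lam.ord, ltStarOn (A n) u (f α))
    (hcof : ∀ n, ∀ i ∈ A n, (g n i).cof = lam) :
    ∃ B ⊆ ⋃ n, A n, (∀ n, (A n \ B).Finite) ∧
      ∃ gB : ℕ → Ordinal, (∀ i ∈ B, (gB i).cof = lam) ∧
        (∀ α < lam.ord, ltStarOn B (f α) gB) ∧
        (∀ u : ℕ → Ordinal, ltStarOn B u gB → ∃ α < lam.ord, ltStarOn B u (f α)) := by
  have hpos : 0 < lam.ord := ord_pos.2 (aleph0_pos.trans hunc)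
  have hg (n : ℕ) : IsExactUpperBoundOn (A n) f lam.ord (g n) := ⟨hub n, hexact n⟩
  obtain ⟨G, hGg, hGmem⟩ := exists_glue_of_pairwise_eventually_eq A g fun m n =>
    (hg m).eventually_eq hpos (hg n)
  have hGcof : ∀ i ∈ ⋃ n, A n, (G i).cof = lam := fun i hi => by
    obtain ⟨n, hin, hGi⟩ := hGmem i hi
    exact hGi ▸ hcof n i hin
  obtain ⟨B, hBU, hAB, hB⟩ := exists_almost_superset_isExactUpperBoundOn hreg hunc hlt hf
    (fun n => (hg n).congr (hGg n)) hGcof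
  exact ⟨B, hBU, hAB, G, fun i hi => hGcof i (hBU hi), hB⟩

/-- for regular uncountable λ < 𝔟, if each ⟨f_α ↾ A_n⟩ has an exact upper bound
of pointwise cofinality λ, then there is B ⊆ A = ⋃ A_n with A_n ⊆* B for all n such that
⟨f_α ↾ B⟩ has an exact upper bound of pointwise cofinality λ. -/
theorem stmt_6 (lam : Cardinal.{0}) (hreg : lam.IsRegular) (hunc : ℵ₀ < lam)
    (hlt : lam < boundingNumber)
    (A : ℕ → Set ℕ) (hmono : ∀ n, A n ⊆ A (n + 1)) (hinf : ∀ n, (A n).Infinite)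
    (f : Ordinal → ℕ → Ordinal)
    (hf : ∀ α < lam.ord, ∀ β < lam.ord, α < β → ltStarOn (⋃ n, A n) (f α) (f β))
    (g : ℕ → ℕ → Ordinal)
    (hub : ∀ n, ∀ α < lam.ord, ltStarOn (A n) (f α) (g n))
    (hexact : ∀ n, ∀ u : ℕ → Ordinal, ltStarOn (A n) u (g n) →
      ∃ α < lam.ord, ltStarOn (A n) u (f α))
    (hcof : ∀ n, ∀ i ∈ A n, (g n i).cof = lam) :
    ∃ B ⊆ ⋃ n, A n, (∀ n, (A n \ B).Finite) ∧
      ∃ gB : ℕ → Ordinal, (∀ i ∈ B, (gB i).cof = lam) ∧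
        (∀ α < lam.ord, ltStarOn B (f α) gB) ∧
        (∀ u : ℕ → Ordinal, ltStarOn B u gB → ∃ α < lam.ord, ltStarOn B u (f α)) :=
  stmt_6_general lam hreg hunc hlt A f hf g hub hexact hcof
end

section
/- Assume 𝔡 = ω₁. Let ⟨A_n : n < ω⟩ be an increasing sequence of subsets of ω with each A_{n+1} \ A_n infinite and union ω. Then there is a <*-increasing sequence ⟨f_β : β < ω₁⟩ of functions from ω to the ordinals such that for every n, the constant function ω₁·ω₁ restricted to A_n is an exact upper bound of ⟨f_β ↾ A_n : β < ω₁⟩, yet for every σ ∈ ω→ω there exists ξ < ω₁ such that for all β < ω₁, the constant function ω₁·ξ restricted to B_σ is not eventually dominated by f_β ↾ B_σ, where B_σ = ⋃_n {i ∈ A_n : i ≥ i^n_{σ(n)}} and ⟨i^n_k⟩ enumerates A_n increasingly. -/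
open Cardinal Ordinal

/-- The dominating number 𝔡. -/
noncomputable def dominatingNumber : Cardinal.{0} :=
  sInf {c | ∃ F : Set (ℕ → ℕ), #F = c ∧ ∀ g : ℕ → ℕ, ∃ f ∈ F, ltStarN g f}

/-!
Write `f_β(i) = ω₁ · v_β(i) + t_β(i)`, where `⟨t_β⟩` is any `<*`-increasing `ω₁`-sequence in
`ω^ω` and `⟨v_β⟩` is a `≤*`-increasing sequence of functions `ω → ω₁`. Since `𝔡 = ω₁`, some
family `⟨g_γ : γ < ω₁⟩` dominates every `σ` everywhere, and then the set `D_γ` of points of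
`A_{n+1}` beyond its `g_γ(n+1)`-th element lies inside `B_σ` whenever `σ ≤ g_γ`. The `v_β` are
built by recursion so that every `v_β` is `≤ γ` at infinitely many points of every `D_γ \ A_n`,
which defeats domination of `ω₁ · (γ + 1)` on `B_σ`, while `v_β > ζ` on `A_n` for the `β`-th pair
`(n, ζ) ∈ ω × ω₁`, which gives exactness. At stage `β` one diagonalises against the countably many
earlier stages: a sparse set of fresh points of each `D_γ`, where the earlier stages are already
`≤ γ`, receives the value `γ`, and every other point receives a countable ordinal above all
earlier values.
-/

open Set Filter

namespace Ordinal

theorem countable_Iio_of_lt_omega_one {o : Ordinal} (h : o < ω₁) : (Iio o).Countable := by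
  rw [← le_aleph0_iff_set_countable, Cardinal.mk_Iio_ordinal, lift_le_aleph0]
  exact lt_aleph_one_iff.1 (lt_omega_iff_card_lt.1 h)

theorem natCast_lt_omega_one (n : ℕ) : (n : Ordinal) < ω₁ :=
  (natCast_lt_omega0 n).trans omega0_lt_omega_one

theorem exists_lt_omega_one_forall_lt {ι : Type*} [Countable ι] {f : ι → Ordinal}
    (h : ∀ i, f i < ω₁) : ∃ θ < ω₁, ∀ i, f i < θ :=
  ⟨⨆ i, (f i + 1), iSup_lt_omega_one fun i => (isSuccLimit_omega 1).add_one_lt (h i),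
    fun i => (Order.lt_add_one_iff.2 le_rfl).trans_le (Ordinal.le_iSup (fun i => f i + 1) i)⟩

theorem mul_add_lt_mul {a b c t : Ordinal} (hab : a < b) (ht : t < c) : c * a + t < c * b :=
  calc c * a + t < c * a + c := add_lt_add_right ht _
    _ = c * Order.succ a := (mul_succ c a).symm
    _ ≤ c * b := mul_le_mul_right (Order.succ_le_of_lt hab) c

theorem mul_add_lt_mul_add {a b c s t : Ordinal} (hab : a ≤ b) (hs : s < c) (hst : s < t) :
    c * a + s < c * b + t := by
  rcases hab.lt_or_eq with hab | rfl
  · exact (mul_add_lt_mul hab hs).trans_le le_self_add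
  · exact add_lt_add_right hst _

theorem exists_surjOn_Iio_omega_one {α : Type u} [Nonempty α] (h : #α ≤ ℵ₁) :
    ∃ e : Ordinal.{v} → α, SurjOn e (Iio ω₁) Set.univ := by
  obtain ⟨ι⟩ : Nonempty (α ↪ Iio (ω₁ : Ordinal.{v})) := by
    rw [← lift_mk_le']
    simpa [Cardinal.mk_Iio_ordinal] using h
  have hι : Function.Injective fun a => (ι a : Ordinal) := Subtype.val_injective.comp ι.injective
  exact ⟨Function.invFun fun a => (ι a : Ordinal), fun a _ =>
    ⟨ι a, (ι a).2, Function.leftInverse_invFun hι a⟩⟩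

theorem exists_seq_of_extend {S : Type*} [Nonempty S] {o : Ordinal.{v}}
    (P : Ordinal.{v} → S → Prop) (R : S → S → Prop)
    (extend : ∀ β < o, ∀ s : Ordinal.{v} → S, (∀ α < β, P α (s α) ∧ ∀ α' < α, R (s α') (s α)) →
      ∃ x, P β x ∧ ∀ α < β, R (s α) x) :
    ∃ s : Ordinal.{v} → S, ∀ β < o, P β (s β) ∧ ∀ α < β, R (s α) (s β) := by
  classical
  let s : Ordinal.{v} → S := wellFounded_lt.fix fun β ih =>
    if h : ∃ x, P β x ∧ ∀ α (hα : α < β), R (ih α hα) x then h.choose else Classical.arbitrary S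
  refine ⟨s, fun β => ?_⟩
  induction β using WellFoundedLT.induction with
  | _ β ih =>
    intro hβ
    have h := extend β hβ s fun α hα => ih α hα (hα.trans hβ)
    rw [show s β = _ from wellFounded_lt.fix_eq _ β, dif_pos h]
    exact h.choose_spec

end Ordinal

open Ordinal

theorem exists_eventually_lt_of_countable {s : Set (ℕ → ℕ)} (hs : s.Countable) :
    ∃ g : ℕ → ℕ, ∀ f ∈ s, ∀ᶠ m in cofinite, f m < g m := by
  classical
  let K := hs.finiteExhaustion
  refine ⟨fun m => (K.finite m).toFinset.sup (· m) + 1, fun f hf => ?_⟩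
  obtain ⟨t₀, ht₀⟩ := mem_iUnion.1 (K.iUnion_eq.symm ▸ hf : f ∈ ⋃ t, K t)
  refine eventually_cofinite.2 ((finite_lt_nat t₀).subset fun m hm => ?_)
  by_contra hlt
  refine hm (Nat.lt_succ_of_le ?_)
  exact Finset.le_sup (f := (· m)) ((K.finite m).mem_toFinset.2 (K.mono (not_lt.1 hlt) ht₀))

theorem exists_eventually_lt_chain :
    ∃ t : Ordinal.{v} → ℕ → ℕ, ∀ β < ω₁, ∀ α < β, ∀ᶠ m in cofinite, t α m < t β m := by
  obtain ⟨t, ht⟩ := exists_seq_of_extend (o := ω₁) (fun _ _ => True)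
    (fun f g : ℕ → ℕ => ∀ᶠ m in cofinite, f m < g m) fun β hβ s _ => by
      obtain ⟨g, hg⟩ :=
        exists_eventually_lt_of_countable ((countable_Iio_of_lt_omega_one hβ).image s)
      exact ⟨g, trivial, fun α hα => hg _ (mem_image_of_mem s hα)⟩
  exact ⟨t, fun β hβ => (ht β hβ).2⟩

theorem exists_dominating_family_card_eq :
    ∃ F : Set (ℕ → ℕ), #F = dominatingNumber ∧ ∀ g, ∃ f ∈ F, ltStarN g f :=
  csInf_mem (s := {c | ∃ F : Set (ℕ → ℕ), #F = c ∧ ∀ g, ∃ f ∈ F, ltStarN g f})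
    ⟨_, Set.univ, rfl, fun g => ⟨g + 1, mem_univ _, by simp [ltStarN]⟩⟩

theorem exists_omega_one_dominating_family (hd : dominatingNumber ≤ ℵ₁) :
    ∃ fam : Ordinal.{u} → ℕ → ℕ, ∀ σ : ℕ → ℕ, ∃ γ < ω₁, σ ≤ fam γ := by
  classical
  obtain ⟨F, hFcard, hF⟩ := exists_dominating_family_card_eq
  have : Nonempty F := let ⟨f, hf, _⟩ := hF 0; ⟨⟨f, hf⟩⟩
  obtain ⟨e, he⟩ := exists_surjOn_Iio_omega_one.{0, u} (α := F × ℕ) <| by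
    rw [mk_prod, Cardinal.lift_id, Cardinal.lift_id, mk_nat]
    exact (mul_le_max _ _).trans
      (max_le (max_le (hFcard ▸ hd) aleph0_lt_aleph_one.le) aleph0_lt_aleph_one.le)
  refine ⟨fun γ m => max ((e γ).1.1 m) (e γ).2, fun σ => ?_⟩
  obtain ⟨f, hfF, hσf⟩ := hF σ
  obtain ⟨γ, hγ, hγe⟩ := he (mem_univ (⟨f, hfF⟩, hσf.toFinset.sup σ))
  -- the constant absorbs the finitely many exceptions to `σ <* f`
  refine ⟨γ, hγ, fun m => ?_⟩
  simp only [hγe]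
  by_cases hm : f m ≤ σ m
  · exact le_max_of_le_right (Finset.le_sup (hσf.mem_toFinset.2 hm))
  · exact le_max_of_le_left (not_le.1 hm).le

section Bset

variable {A : ℕ → Set ℕ}

theorem Bset_anti (hA : ∀ n, (A n).Infinite) {σ τ : ℕ → ℕ} (h : σ ≤ τ) :
    Bset A τ ⊆ Bset A σ := by
  simp only [Bset, iUnion_subset_iff]
  rintro n i ⟨hi, hτi⟩
  exact mem_iUnion.2 ⟨n, hi, ((Nat.nth_le_nth (hA n)).2 (h n)).trans hτi⟩

theorem Bset_succ_subset (σ : ℕ → ℕ) :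
    Bset (fun n => A (n + 1)) (fun n => σ (n + 1)) ⊆ Bset A σ :=
  iUnion_subset fun n => subset_iUnion_of_subset (n + 1) subset_rfl

theorem Bset_succ_subset_of_le (hinf : ∀ n, (A (n + 1) \ A n).Infinite) {σ τ : ℕ → ℕ}
    (h : σ ≤ τ) : Bset (fun n => A (n + 1)) (fun n => τ (n + 1)) ⊆ Bset A σ :=
  (Bset_anti (fun n => (hinf n).mono sdiff_subset) fun n => h (n + 1)).trans (Bset_succ_subset σ)

theorem infinite_Bset_succ_sdiff (hinf : ∀ n, (A (n + 1) \ A n).Infinite) (g : ℕ → ℕ) (n : ℕ) :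
    (Bset (fun n => A (n + 1)) g \ A n).Infinite := by
  refine ((hinf n).sdiff (finite_lt_nat (Nat.nth (· ∈ A (n + 1)) (g n)))).mono ?_
  rintro i ⟨⟨hi, hin⟩, hig⟩
  exact ⟨mem_iUnion.2 ⟨n, hi, not_lt.1 hig⟩, hin⟩

end Bset

theorem exists_strictMono_forall_mem {X : ℕ → Set ℕ} (hX : ∀ t, (X t).Infinite) :
    ∃ p : ℕ → ℕ, StrictMono p ∧ ∀ t, p t ∈ X t := by
  choose g hgX hlt using fun t n => (hX t).exists_gt n
  let p : ℕ → ℕ := fun t => Nat.rec (g 0 0) (fun t pt => g (t + 1) pt) t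
  refine ⟨p, strictMono_nat_of_lt_succ fun t => hlt _ _, fun t => ?_⟩
  cases t <;> exact hgX _ _

theorem Set.Countable.exists_infinite_fibers {α : Type*} {s : Set α} (hs : s.Countable)
    (hne : s.Nonempty) : ∃ τ : ℕ → α, (∀ t, τ t ∈ s) ∧ ∀ a ∈ s, (τ ⁻¹' {a}).Infinite := by
  obtain ⟨e, rfl⟩ := hs.exists_eq_range hne
  refine ⟨fun t => e t.unpair.1, fun t => mem_range_self _, ?_⟩
  rintro _ ⟨j, rfl⟩
  exact infinite_of_injective_forall_mem (f := Nat.pair j)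
    (fun s s' h => (Nat.pair_eq_pair.1 h).2) fun s => by simp

section FrequentlyLow

variable (A : ℕ → Set ℕ) (D : Ordinal.{u} → Set ℕ)

def FrequentlyLow (w : ℕ → Ordinal.{u}) : Prop :=
  ∀ γ n, {i | i ∈ D γ \ A n ∧ w i ≤ γ}.Infinite

variable {A D}

theorem infinite_forall_le_of_frequentlyLow (hD : ∀ γ n, (D γ \ A n).Infinite)
    {β : Ordinal.{v}} {v : Ordinal.{v} → ℕ → Ordinal.{u}}
    (hlow : ∀ α < β, FrequentlyLow A D (v α)) (hle : ∀ α < β, ∀ α' < α, v α' ≤ᶠ[cofinite] v α)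
    {J : Set Ordinal.{v}} (hJ : J.Finite) (hJβ : J ⊆ Iio β) (γ : Ordinal.{u}) (n : ℕ) :
    {i | i ∈ D γ \ A n ∧ ∀ α ∈ J, v α i ≤ γ}.Infinite := by
  rcases J.eq_empty_or_nonempty with rfl | hne
  · exact (hD γ n).mono fun i hi => ⟨hi, fun _ h => h.elim⟩
  obtain ⟨μ, hμ, hμmax⟩ := exists_max_image J id hJ hne
  have hexc : (⋃ α ∈ J, {i | v μ i < v α i}).Finite := hJ.biUnion fun α hα => by
    rcases (hμmax α hα).lt_or_eq with hαμ | rfl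
    · simpa using eventually_cofinite.1 (hle μ (hJβ hμ) α hαμ)
    · simp
  refine ((hlow μ (hJβ hμ) γ n).sdiff hexc).mono ?_
  rintro i ⟨⟨hiD, hiμ⟩, hi⟩
  simp only [mem_iUnion, mem_ofPred_eq, not_exists, not_lt] at hi
  exact ⟨hiD, fun α hα => (hi α hα).trans hiμ⟩

theorem frequentlyLow_extend (hmono : ∀ n, A n ⊆ A (n + 1)) (hD : ∀ γ n, (D γ \ A n).Infinite)
    {p : ℕ → ℕ} (hp : p.Injective) {τ : ℕ → Ordinal.{u}} {Θ : Ordinal.{u}}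
    (hτΘ : ∀ t, τ t < Θ) (hτ : ∀ γ < Θ, (τ ⁻¹' {γ}).Infinite) (hpD : ∀ t, p t ∈ D (τ t) \ A t) :
    FrequentlyLow A D (Function.extend p τ fun _ => Θ) := by
  intro γ n
  rcases lt_or_ge γ Θ with hγ | hγ
  · have hT : {t | τ t = γ ∧ n ≤ t}.Infinite :=
      ((hτ γ hγ).sdiff (finite_lt_nat n)).mono fun t h => ⟨h.1, not_lt.1 h.2⟩
    refine (hT.image hp.injOn).mono ?_
    rintro _ ⟨t, ⟨rfl, hnt⟩, rfl⟩
    exact ⟨⟨(hpD t).1, fun h => (hpD t).2 (monotone_nat_of_le_succ hmono hnt h)⟩,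
      (hp.extend_apply _ _ t).le⟩
  · refine (hD γ n).mono fun i hi => ⟨hi, le_trans ?_ hγ⟩
    by_cases h : ∃ t, p t = i
    · obtain ⟨t, rfl⟩ := h
      exact (hp.extend_apply _ _ t).trans_le (hτΘ t).le
    · exact (Function.extend_apply' _ _ _ h).le

theorem exists_next_stage (hmono : ∀ n, A n ⊆ A (n + 1)) (hD : ∀ γ n, (D γ \ A n).Infinite)
    {β : Ordinal.{v}} (hβ : β < ω₁) {v : Ordinal.{v} → ℕ → Ordinal.{u}}
    (hlt : ∀ α < β, ∀ i, v α i < ω₁) (hlow : ∀ α < β, FrequentlyLow A D (v α))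
    (hle : ∀ α < β, ∀ α' < α, v α' ≤ᶠ[cofinite] v α) (n₀ : ℕ) {ζ : Ordinal.{u}} (hζ : ζ < ω₁) :
    ∃ w : ℕ → Ordinal.{u}, ((∀ i, w i < ω₁) ∧ FrequentlyLow A D w ∧ ∀ i ∈ A n₀, ζ < w i) ∧
      ∀ α < β, v α ≤ᶠ[cofinite] w := by
  have hβc := countable_Iio_of_lt_omega_one hβ
  have : Countable (Iio β) := hβc.to_subtype
  obtain ⟨Θ, hΘ, hΘbound⟩ := exists_lt_omega_one_forall_lt (ι := Option (Iio β × ℕ))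
    (f := fun o => o.elim ζ fun p => v p.1 p.2)
    (by rintro (_ | ⟨⟨α, hα⟩, i⟩); exacts [hζ, hlt α hα i])
  have hζΘ : ζ < Θ := hΘbound none
  have hvΘ : ∀ α < β, ∀ i, v α i < Θ := fun α hα i => hΘbound (some (⟨α, hα⟩, i))
  obtain ⟨τ, hτΘ, hτ⟩ := (countable_Iio_of_lt_omega_one hΘ).exists_infinite_fibers ⟨ζ, hζΘ⟩
  let K := hβc.finiteExhaustion
  -- guarding `p t` by the finitely many stages in `K t` makes every earlier stage `≤*` the new one
  obtain ⟨p, hp, hpX⟩ := exists_strictMono_forall_mem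
    (X := fun t => {i | i ∈ D (τ t) \ A (max n₀ t) ∧ ∀ α ∈ K t, v α i ≤ τ t}) fun t =>
      infinite_forall_le_of_frequentlyLow hD hlow hle (K.finite t)
        ((subset_iUnion (⇑K) t).trans K.iUnion_eq.subset) _ _
  have hpA : ∀ t n, n ≤ max n₀ t → p t ∉ A n := fun t n hn h =>
    (hpX t).1.2 (monotone_nat_of_le_succ hmono hn h)
  refine ⟨Function.extend p τ fun _ => Θ, ⟨fun i => ?_, ?_, fun i hi => ?_⟩, fun α hα => ?_⟩
  · by_cases h : ∃ t, p t = i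
    · obtain ⟨t, rfl⟩ := h
      exact (hp.injective.extend_apply _ _ t).trans_lt ((hτΘ t).trans hΘ)
    · exact (Function.extend_apply' _ _ _ h).trans_lt hΘ
  · exact frequentlyLow_extend hmono hD hp.injective hτΘ hτ fun t =>
      ⟨(hpX t).1.1, hpA t t (le_max_right _ _)⟩
  · rw [Function.extend_apply' _ _ _ fun ⟨t, ht⟩ => hpA t n₀ (le_max_left _ _) (ht ▸ hi)]
    exact hζΘ
  · obtain ⟨t₀, ht₀⟩ := mem_iUnion.1 (K.iUnion_eq.symm ▸ hα : α ∈ ⋃ t, K t)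
    refine eventually_cofinite.2 (((finite_lt_nat t₀).image p).subset fun i hi => ?_)
    by_cases h : ∃ t, p t = i
    · obtain ⟨t, rfl⟩ := h
      refine mem_image_of_mem p (show t < t₀ from not_le.1 fun ht => hi ?_)
      rw [hp.injective.extend_apply]
      exact (hpX t).2 α (K.mono ht ht₀)
    · exact absurd (Function.extend_apply' _ _ _ h ▸ (hvΘ α hα i).le) hi

theorem exists_frequentlyLow_chain (hmono : ∀ n, A n ⊆ A (n + 1))
    (hD : ∀ γ n, (D γ \ A n).Infinite) (n : Ordinal.{v} → ℕ) (ζ : Ordinal.{v} → Ordinal.{u})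
    (hζ : ∀ β, ζ β < ω₁) :
    ∃ val : Ordinal.{v} → ℕ → Ordinal.{u}, ∀ β < ω₁,
      ((∀ i, val β i < ω₁) ∧ FrequentlyLow A D (val β) ∧ ∀ i ∈ A (n β), ζ β < val β i) ∧
      ∀ α < β, val α ≤ᶠ[cofinite] val β :=
  exists_seq_of_extend _ _ fun β hβ _ hs =>
    exists_next_stage hmono hD hβ (fun α hα => (hs α hα).1.1) (fun α hα => (hs α hα).1.2.1)
      (fun α hα => (hs α hα).2) (n β) (hζ β)

end FrequentlyLow

theorem exists_lt_omega_one_forall_lt_mul (u : ℕ → Ordinal) :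
    ∃ ζ < ω₁, ∀ i, u i < ω₁ * ω₁ → u i < ω₁ * ζ := by
  have hω := (omega_pos 1).ne'
  obtain ⟨ζ, hζ, h⟩ := exists_lt_omega_one_forall_lt (ι := {i // u i < ω₁ * ω₁})
    (f := fun i => u i / ω₁) fun i => (lt_mul_iff_div_lt hω).1 i.2
  exact ⟨ζ, hζ, fun i hi => (lt_mul_iff_div_lt hω).2 (h ⟨i, hi⟩)⟩

theorem stmt_8_general (hd : dominatingNumber = aleph 1)
    (A : ℕ → Set ℕ) (hmono : ∀ n, A n ⊆ A (n + 1))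
    (hinf : ∀ n, (A (n + 1) \ A n).Infinite) :
    ∃ f : Ordinal → ℕ → Ordinal,
      (∀ α < (aleph 1).ord, ∀ β < (aleph 1).ord, α < β →
        {i : ℕ | ¬ f α i < f β i}.Finite) ∧
      (∀ n, (∀ β < (aleph 1).ord,
          ltStarOn (A n) (f β) (fun _ => (aleph 1).ord * (aleph 1).ord)) ∧
        (∀ u : ℕ → Ordinal, ltStarOn (A n) u (fun _ => (aleph 1).ord * (aleph 1).ord) →
          ∃ β < (aleph 1).ord, ltStarOn (A n) u (f β))) ∧
      (∀ σ : ℕ → ℕ, ∃ ξ < (aleph 1).ord, ∀ β < (aleph 1).ord,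
        ¬ ltStarOn (Bset A σ) (fun _ => (aleph 1).ord * ξ) (f β)) := by
  simp only [ord_aleph]
  obtain ⟨fam, hfam⟩ := exists_omega_one_dominating_family hd.le
  have : Nonempty (Iio (ω₁ : Ordinal)) := ⟨⟨0, omega_pos 1⟩⟩
  obtain ⟨task, htask⟩ := exists_surjOn_Iio_omega_one (α := ℕ × Iio (ω₁ : Ordinal))
    (by simp [Cardinal.mk_Iio_ordinal])
  obtain ⟨tie, htie⟩ := exists_eventually_lt_chain
  obtain ⟨val, hval⟩ := exists_frequentlyLow_chain
    (D := fun γ => Bset (fun n => A (n + 1)) fun n => fam γ (n + 1)) hmono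
    (fun γ => infinite_Bset_succ_sdiff hinf _) (fun β => (task β).1) (fun β => (task β).2)
    fun β => (task β).2.2
  refine ⟨fun β i => ω₁ * val β i + tie β i, fun α _ β hβ hαβ => ?_,
    fun n => ⟨fun β hβ => ?_, fun u hu => ?_⟩, fun σ => ?_⟩
  · exact eventually_cofinite.1 ((((hval β hβ).2 α hαβ).and (htie β hβ α hαβ)).mono
      fun i h => mul_add_lt_mul_add h.1 (natCast_lt_omega_one _) (Nat.cast_lt.2 h.2))
  · exact finite_empty.subset fun i hi =>
      hi.2 (mul_add_lt_mul ((hval β hβ).1.1 i) (natCast_lt_omega_one _))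
  · obtain ⟨ζ, hζ, huζ⟩ := exists_lt_omega_one_forall_lt_mul u
    obtain ⟨β, hβ, hβtask⟩ := htask (mem_univ (n, ⟨ζ, hζ⟩))
    have hζval := (hval β hβ).1.2.2
    rw [hβtask] at hζval
    refine ⟨β, hβ, hu.subset fun i hi => ⟨hi.1, fun hui => hi.2 ?_⟩⟩
    calc u i < ω₁ * ζ := huζ i hui
      _ ≤ ω₁ * val β i := mul_le_mul_right (hζval i hi.1).le _
      _ ≤ _ := le_self_add
  · obtain ⟨γ, hγ, hσγ⟩ := hfam σ
    refine ⟨γ + 1, (isSuccLimit_omega 1).add_one_lt hγ, fun β hβ hfin => ?_⟩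
    refine ((hval β hβ).1.2.1 γ 0).mono ?_ hfin
    rintro i ⟨⟨hiD, -⟩, hiγ⟩
    exact ⟨Bset_succ_subset_of_le hinf hσγ hiD,
      (mul_add_lt_mul (Order.lt_add_one_iff.2 hiγ) (natCast_lt_omega_one _)).not_gt⟩

/-- if 𝔡 = ω₁, there is a <*-increasing ω₁-sequence ⟨f_β⟩ of ordinal functions
on ω such that the constant function ω₁·ω₁ restricted to each A_n is an exact upper bound of
the restrictions, yet for every σ there is ξ < ω₁ such that no f_β eventually dominates the
constant function ω₁·ξ on B_σ. -/
theorem stmt_8 (hd : dominatingNumber = aleph 1)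
    (A : ℕ → Set ℕ) (hmono : ∀ n, A n ⊆ A (n + 1))
    (hinf : ∀ n, (A (n + 1) \ A n).Infinite)
    (hcover : (⋃ n, A n) = Set.univ) :
    ∃ f : Ordinal → ℕ → Ordinal,
      (∀ α < (aleph 1).ord, ∀ β < (aleph 1).ord, α < β →
        {i : ℕ | ¬ f α i < f β i}.Finite) ∧
      (∀ n, (∀ β < (aleph 1).ord,
          ltStarOn (A n) (f β) (fun _ => (aleph 1).ord * (aleph 1).ord)) ∧
        (∀ u : ℕ → Ordinal, ltStarOn (A n) u (fun _ => (aleph 1).ord * (aleph 1).ord) →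
          ∃ β < (aleph 1).ord, ltStarOn (A n) u (f β))) ∧
      (∀ σ : ℕ → ℕ, ∃ ξ < (aleph 1).ord, ∀ β < (aleph 1).ord,
        ¬ ltStarOn (Bset A σ) (fun _ => (aleph 1).ord * ξ) (f β)) :=
  stmt_8_general hd A hmono hinf
end

section
/- Assume 𝔡 = ω₁ and fix a <*-increasing dominating family ⟨σ_α : α < ω₁⟩ in ω→ω. Let ⟨A_n : n < ω⟩ be increasing subsets of ω with each A_{n+1}\A_n infinite and union ω, and write B_α = ⋃_n {i ∈ A_n : i ≥ i^n_{σ_α(n)}}. Then there exists a family ⟨X^β_α : α < β < ω₁⟩ of subsets of ω such that, setting X^β = ⋃_{α<β} X^β_α: (1) X^β ∩ A_n is finite for all β and n; (2) α < α' < β implies X^β_α ⊆ X^β_{α'}; (3) X^β_α ∩ B_α is infinite for all α < β; (4) for β < β', the set ⋃_{α<β}(X^β_α \ X^{β'}_α) is finite. -/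
open Cardinal Ordinal

private lemma count_le_count_aux {p q : ℕ → Prop} [DecidablePred p] [DecidablePred q]
    (h : ∀ i, p i → q i) (n : ℕ) : Nat.count p n ≤ Nat.count q n := by
  rw [Nat.count_eq_card_filter_range, Nat.count_eq_card_filter_range]
  apply Finset.card_le_card
  intro x hx
  simp only [Finset.mem_filter] at hx ⊢
  exact ⟨hx.1, h x hx.2⟩

private lemma nth_le_nth_of_subset_aux {p q : ℕ → Prop} (hpq : ∀ i, p i → q i)
    (hp : (setOf p).Infinite) (k : ℕ) : Nat.nth q k ≤ Nat.nth p k := by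
  classical
  have hq : (setOf q).Infinite := hp.mono fun x hx => hpq x hx
  have h1 : k ≤ Nat.count q (Nat.nth p k) := by
    calc k = Nat.count p (Nat.nth p k) := (Nat.count_nth_of_infinite hp k).symm
    _ ≤ Nat.count q (Nat.nth p k) := count_le_count_aux hpq _
  calc Nat.nth q k ≤ Nat.nth q (Nat.count q (Nat.nth p k)) := (Nat.nth_le_nth hq).2 h1
  _ = Nat.nth p k := Nat.nth_count (hpq _ (Nat.nth_mem_of_infinite hp k))

private lemma finite_count_lt_aux {p : ℕ → Prop} [DecidablePred p] (c : ℕ) :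
    {i | p i ∧ Nat.count p i < c}.Finite := by
  apply Set.Finite.subset ((Set.finite_Iio c).image (Nat.nth p))
  rintro i ⟨hpi, hc⟩
  exact ⟨_, hc, Nat.nth_count hpi⟩

/-- assuming 𝔡 = ω₁ and a fixed <*-increasing dominating family ⟨σ_α : α < ω₁⟩,
there exists a family ⟨X^β_α : α < β < ω₁⟩ of subsets of ω satisfying (1)–(4). -/
theorem stmt_9 (hd : dominatingNumber = aleph 1)
    (σ : Ordinal → (ℕ → ℕ))
    (hσinc : ∀ α < (aleph 1).ord, ∀ β < (aleph 1).ord, α < β → ltStarN (σ α) (σ β))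
    (hσdom : ∀ τ : ℕ → ℕ, ∃ α < (aleph 1).ord, ltStarN τ (σ α))
    (A : ℕ → Set ℕ) (hmono : ∀ n, A n ⊆ A (n + 1))
    (hinf : ∀ n, (A (n + 1) \ A n).Infinite)
    (hcover : (⋃ n, A n) = Set.univ) :
    ∃ X : Ordinal → Ordinal → Set ℕ,
      -- (1) X^β ∩ A_n is finite
      (∀ β < (aleph 1).ord, ∀ n, ((⋃ α ∈ Set.Iio β, X β α) ∩ A n).Finite) ∧
      -- (2) α < α' < β implies X^β_α ⊆ X^β_{α'}
      (∀ β < (aleph 1).ord, ∀ α α' : Ordinal, α < α' → α' < β → X β α ⊆ X β α') ∧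
      -- (3) X^β_α ∩ B_α is infinite
      (∀ β < (aleph 1).ord, ∀ α < β, (X β α ∩ Bset A (σ α)).Infinite) ∧
      -- (4) for β < β', ⋃_{α<β} (X^β_α \ X^{β'}_α) is finite
      (∀ β < (aleph 1).ord, ∀ β' < (aleph 1).ord, β < β' →
        (⋃ α ∈ Set.Iio β, (X β α \ X β' α)).Finite) := by
  classical
  -- monotonicity of the chain
  have hmono' : ∀ m n : ℕ, m ≤ n → A m ⊆ A n := by
    intro m n h
    induction n, h using Nat.le_induction with
    | base => exact subset_rfl
    | succ n hn ih => exact ih.trans (hmono n)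
  have hLinf : ∀ n : ℕ, {i : ℕ | i ∈ A (n + 1) \ A n}.Infinite := fun n => hinf n
  refine ⟨fun β α => {i | ∃ n : ℕ, ∃ γ, γ ≤ α ∧ i ∈ A (n + 1) \ A n ∧
      σ γ (n + 1) ≤ Nat.count (· ∈ A (n + 1) \ A n) i ∧
      Nat.count (· ∈ A (n + 1) \ A n) i < σ β (n + 1)}, ?_, ?_, ?_, ?_⟩
  · -- (1)
    intro β _ m
    apply Set.Finite.subset
      (Set.Finite.biUnion (Set.finite_Iio m)
        (fun n _ => finite_count_lt_aux (p := (· ∈ A (n + 1) \ A n)) (σ β (n + 1))))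
    rintro i ⟨hiU, hiA⟩
    simp only [Set.mem_iUnion, Set.mem_setOf_eq] at hiU
    obtain ⟨α, hαβ, n, γ, hγ, hL, h1, h2⟩ := hiU
    have hnm : n < m := by
      by_contra h
      exact hL.2 (hmono' m n (le_of_not_gt h) hiA)
    simp only [Set.mem_iUnion, Set.mem_setOf_eq]
    exact ⟨n, hnm, hL, h2⟩
  · -- (2)
    rintro β _ α α' hαα' _ i ⟨n, γ, hγ, rest⟩
    exact ⟨n, γ, hγ.trans hαα'.le, rest⟩
  · -- (3)
    intro β hβ α hαβ
    have hα : α < (aleph 1).ord := hαβ.trans hβ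
    have hfin : {n | σ β n ≤ σ α n}.Finite := hσinc α hα β hβ hαβ
    obtain ⟨N, hN⟩ := hfin.bddAbove
    have hdom : ∀ n, N < n → σ α n < σ β n := by
      intro n hn
      by_contra h
      exact absurd (hN (not_lt.1 h)) (not_le.2 hn)
    set f : ℕ → ℕ := fun k =>
      Nat.nth (· ∈ A (N + k + 1) \ A (N + k)) (σ α (N + k + 1)) with hf
    have hm : ∀ k, f k ∈ A (N + k + 1) \ A (N + k) := fun k =>
      Nat.nth_mem_of_infinite (hLinf (N + k)) _
    apply Set.infinite_of_injective_forall_mem (f := f)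
    · intro k l hkl
      rcases lt_trichotomy k l with h | h | h
      · exfalso
        have : f k ∈ A (N + l) := hmono' (N + k + 1) (N + l) (by omega) (hm k).1
        rw [hkl] at this
        exact (hm l).2 this
      · exact h
      · exfalso
        have : f l ∈ A (N + k) := hmono' (N + l + 1) (N + k) (by omega) (hm l).1
        rw [← hkl] at this
        exact (hm k).2 this
    · intro k
      have hcount : Nat.count (· ∈ A (N + k + 1) \ A (N + k)) (f k) = σ α (N + k + 1) :=
        Nat.count_nth_of_infinite (hLinf (N + k)) _
      constructor
      · exact ⟨N + k, α, le_rfl, hm k, by rw [hcount], by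
          rw [hcount]; exact hdom (N + k + 1) (by omega)⟩
      · refine Set.mem_iUnion.2 ⟨N + k + 1, ?_⟩
        refine ⟨(hm k).1, ?_⟩
        exact nth_le_nth_of_subset_aux (fun i hi => hi.1) (hLinf (N + k)) (σ α (N + k + 1))
  · -- (4)
    intro β hβ β' hβ' hββ'
    have hfin : {n | σ β' n ≤ σ β n}.Finite := hσinc β hβ β' hβ' hββ'
    have hfin' : {n : ℕ | n + 1 ∈ {n | σ β' n ≤ σ β n}}.Finite := by
      apply Set.Finite.preimage (f := fun n => n + 1) _ hfin
      exact Set.injOn_of_injective (fun a b h => by omega)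
    apply Set.Finite.subset
      (Set.Finite.biUnion hfin'
        (fun n _ => finite_count_lt_aux (p := (· ∈ A (n + 1) \ A n)) (σ β (n + 1))))
    intro i hi
    simp only [Set.mem_iUnion, Set.mem_diff, Set.mem_setOf_eq] at hi
    obtain ⟨α, hαβ, ⟨n, γ, hγ, hL, h1, h2⟩, hnot⟩ := hi
    have hS : σ β' (n + 1) ≤ σ β (n + 1) := by
      by_contra h
      exact hnot ⟨n, γ, hγ, hL, h1, h2.trans (lt_of_not_ge h)⟩
    simp only [Set.mem_iUnion, Set.mem_setOf_eq]
    exact ⟨n, hS, hL, h2⟩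
end
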